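/- arXiv:1512.08691 — 8 statements merged into one kernel-verified Lean document; each statement's English description precedes it below -/
import Mathlib

section
/- Let X be a compact topological space and let A be a norm-bounded subset of C(X), the space of continuous real-valued functions on X. Then the following are equivalent: (i) the closure of A in the product space ℝ^X (topology of pointwise convergence) is compact and contained in C(X); (ii) for every sequence (f_n) in A and every sequence (x_m) in X, the iterated limits lim_n lim_m f_n(x_m) and lim_m lim_n f_n(x_m) are equal whenever both exist. -/
open Filter Topology

section Aux

variable {X : Type*} [TopologicalSpace X]

/-- A cluster point of a convergent sequence equals the limit. -/
lemma mcp_eq_of_tendsto' {α : Type*} [TopologicalSpace α] [T2Space α]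
    {u : ℕ → α} {c L : α} (hc : MapClusterPt c atTop u)
    (hL : Tendsto u atTop (𝓝 L)) : c = L :=
  eq_of_nhds_neBot (hc.clusterPt.mono hL)

/-- Members of the pointwise closure can be approximated on finite sets. -/
lemma grothendieck_subA (A : Set C(X, ℝ)) (g : X → ℝ)
    (hg : g ∈ closure ((fun f : C(X, ℝ) => (f : X → ℝ)) '' A))
    {δ : ℝ} (hδ : 0 < δ) (s : Finset X) :
    ∃ f ∈ A, ∀ p ∈ s, |f p - g p| < δ := by
  set V : Set (X → ℝ) := ⋂ p ∈ s, (fun h : X → ℝ => h p) ⁻¹' Metric.ball (g p) δ with hV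
  have hVopen : IsOpen V :=
    isOpen_biInter_finset fun p _ => Metric.isOpen_ball.preimage (continuous_apply p)
  have hgV : g ∈ V := by
    simp only [hV, Set.mem_iInter, Set.mem_preimage, Metric.mem_ball]
    intro p _; simpa using hδ
  obtain ⟨h, hhV, f, hfA, rfl⟩ := mem_closure_iff.mp hg V hVopen hgV
  refine ⟨f, hfA, fun p hp => ?_⟩
  have := Set.mem_iInter₂.mp hhV p hp
  simpa [Real.dist_eq] using this

/-- A discontinuity point can be approached while keeping finitely many
continuous functions close to their value at the point. -/
lemma grothendieck_subB (g : X → ℝ) (x₀ : X) (ε : ℝ)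
    (hd : ∀ U ∈ 𝓝 x₀, ∃ x ∈ U, ε ≤ |g x - g x₀|)
    {δ : ℝ} (hδ : 0 < δ) (s : Finset C(X, ℝ)) :
    ∃ x : X, ε ≤ |g x - g x₀| ∧ ∀ f ∈ s, |f x - f x₀| < δ := by
  set U : Set X := ⋂ f ∈ s, (fun x => f x) ⁻¹' Metric.ball (f x₀) δ with hU
  have hUnhds : U ∈ 𝓝 x₀ := by
    refine (isOpen_biInter_finset fun f _ =>
      Metric.isOpen_ball.preimage f.continuous).mem_nhds ?_
    simp only [hU, Set.mem_iInter, Set.mem_preimage, Metric.mem_ball]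
    intro f _; simpa using hδ
  obtain ⟨x, hxU, hx⟩ := hd U hUnhds
  refine ⟨x, hx, fun f hf => ?_⟩
  have := Set.mem_iInter₂.mp hxU f hf
  simpa [Real.dist_eq] using this

/-- The alternating construction of sequences in Grothendieck's criterion. -/
lemma grothendieck_construct (A : Set C(X, ℝ)) (g : X → ℝ)
    (hg : g ∈ closure ((fun f : C(X, ℝ) => (f : X → ℝ)) '' A)) (x₀ : X) (ε : ℝ)
    (hd : ∀ U ∈ 𝓝 x₀, ∃ x ∈ U, ε ≤ |g x - g x₀|) :
    ∃ (f : ℕ → C(X, ℝ)) (x : ℕ → X),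
      (∀ n, f n ∈ A) ∧
      (∀ n, |f n x₀ - g x₀| < 1 / (n + 1)) ∧
      (∀ n i, i < n → |f n (x i) - g (x i)| < 1 / (n + 1)) ∧
      (∀ n j, j ≤ n → |f j (x n) - f j x₀| < 1 / (n + 1)) ∧
      (∀ n, ε ≤ |g (x n) - g x₀|) := by
  classical
  have hA : ∀ (n : ℕ) (v : Fin n → X), ∃ f : C(X, ℝ), f ∈ A ∧
      |f x₀ - g x₀| < 1 / (n + 1) ∧ ∀ i, |f (v i) - g (v i)| < 1 / (n + 1) := by
    intro n v
    have hδ : (0 : ℝ) < 1 / (n + 1) := by positivity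
    obtain ⟨f, hfA, hf⟩ := grothendieck_subA A g hg hδ (insert x₀ (Finset.image v Finset.univ))
    exact ⟨f, hfA, hf x₀ (Finset.mem_insert_self _ _),
      fun i => hf (v i) (Finset.mem_insert_of_mem (Finset.mem_image_of_mem v
        (Finset.mem_univ i)))⟩
  choose F hFA hF0 hFv using hA
  have hB : ∀ (n : ℕ) (w : Fin (n + 1) → C(X, ℝ)), ∃ x : X,
      ε ≤ |g x - g x₀| ∧ ∀ i, |w i x - w i x₀| < 1 / (n + 1) := by
    intro n w
    have hδ : (0 : ℝ) < 1 / (n + 1) := by positivity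
    obtain ⟨x, hx1, hx2⟩ := grothendieck_subB g x₀ ε hd hδ (Finset.image w Finset.univ)
    exact ⟨x, hx1, fun i => hx2 (w i) (Finset.mem_image_of_mem w (Finset.mem_univ i))⟩
  choose XF hX1 hX2 using hB
  -- recursive construction of the state
  let st : (n : ℕ) → (Fin n → X) × (Fin n → C(X, ℝ)) := fun n =>
    Nat.rec (⟨Fin.elim0, Fin.elim0⟩)
      (fun n p => ⟨Fin.snoc p.1 (XF n (Fin.snoc p.2 (F n p.1))),
                   Fin.snoc p.2 (F n p.1)⟩) n
  let f : ℕ → C(X, ℝ) := fun n => F n (st n).1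
  let x : ℕ → X := fun n => XF n (Fin.snoc (st n).2 (f n))
  have hst : ∀ n, st (n + 1) = ⟨Fin.snoc (st n).1 (x n), Fin.snoc (st n).2 (f n)⟩ :=
    fun n => rfl
  have hcoh : ∀ n (i : Fin n), (st n).1 i = x i.val ∧ (st n).2 i = f i.val := by
    intro n
    induction n with
    | zero => exact fun i => i.elim0
    | succ n ih =>
      intro i
      rw [hst]
      refine Fin.lastCases ?_ (fun j => ?_) i
      · simp [Fin.snoc_last]
      · simpa [Fin.snoc_castSucc] using ih j
  refine ⟨f, x, fun n => hFA n _, fun n => hF0 n _, ?_, ?_, fun n => hX1 n _⟩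
  · intro n i hi
    have := hFv n (st n).1 ⟨i, hi⟩
    rwa [(hcoh n ⟨i, hi⟩).1] at this
  · intro n j hj
    have hjlt : j < n + 1 := Nat.lt_succ_of_le hj
    have := hX2 n (Fin.snoc (st n).2 (f n)) ⟨j, hjlt⟩
    have hw : (Fin.snoc (st n).2 (f n) : Fin (n + 1) → C(X, ℝ)) ⟨j, hjlt⟩ = f j := by
      rcases Nat.lt_or_ge j n with h | h
      · have : (⟨j, hjlt⟩ : Fin (n + 1)) = Fin.castSucc ⟨j, h⟩ := rfl
        rw [this, Fin.snoc_castSucc]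
        exact (hcoh n ⟨j, h⟩).2
      · have hjn : j = n := le_antisymm hj h
        subst hjn
        have : (⟨j, hjlt⟩ : Fin (j + 1)) = Fin.last j := rfl
        rw [this, Fin.snoc_last]
    rwa [hw] at this

end Aux

/-- Grothendieck's criterion: for a compact space `X` and a norm-bounded set
`A ⊆ C(X)`, the pointwise closure of `A` in `ℝ^X` is compact and consists of
continuous functions iff iterated double limits along sequences agree whenever
both exist. -/
theorem grothendieck_criterion {X : Type*} [TopologicalSpace X] [CompactSpace X]
    (A : Set C(X, ℝ)) (hbdd : ∃ r : ℝ, ∀ f ∈ A, ∀ x : X, |f x| ≤ r) :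
    (IsCompact (closure ((fun f : C(X, ℝ) => (f : X → ℝ)) '' A)) ∧
        ∀ g ∈ closure ((fun f : C(X, ℝ) => (f : X → ℝ)) '' A), Continuous g) ↔
      (∀ f : ℕ → C(X, ℝ), (∀ n, f n ∈ A) → ∀ x : ℕ → X,
        ∀ y z : ℕ → ℝ, ∀ L₁ L₂ : ℝ,
          (∀ n, Tendsto (fun m => f n (x m)) atTop (𝓝 (y n))) →
          Tendsto y atTop (𝓝 L₁) →
          (∀ m, Tendsto (fun n => f n (x m)) atTop (𝓝 (z m))) →
          Tendsto z atTop (𝓝 L₂) →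
          L₁ = L₂) := by
  constructor
  · rintro ⟨hcpt, hcont⟩
    intro f hfA x y z L₁ L₂ hy hL₁ hz hL₂
    set K := closure ((fun f : C(X, ℝ) => (f : X → ℝ)) '' A) with hK
    have hu : ∀ n, (f n : X → ℝ) ∈ K := fun n =>
      subset_closure (Set.mem_image_of_mem _ (hfA n))
    have hle : map (fun n => (f n : X → ℝ)) atTop ≤ 𝓟 K :=
      tendsto_principal.mpr (Eventually.of_forall hu)
    obtain ⟨g, hgK, hg⟩ := hcpt.exists_mapClusterPt hle
    obtain ⟨ξ, hξ⟩ := exists_clusterPt_of_compactSpace (map x atTop)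
    have hξ' : MapClusterPt ξ atTop x := hξ
    have hgc : Continuous g := hcont g hgK
    have hgz : ∀ m, g (x m) = z m := by
      intro m
      have hc : MapClusterPt (g (x m)) atTop (fun n => f n (x m)) :=
        MapClusterPt.continuousAt_comp (f := fun p : X → ℝ => p (x m))
          (continuous_apply (x m)).continuousAt hg
      exact mcp_eq_of_tendsto' hc (hz m)
    have hfy : ∀ n, f n ξ = y n := by
      intro n
      have hc : MapClusterPt (f n ξ) atTop (fun m => f n (x m)) :=
        MapClusterPt.continuousAt_comp (f := fun p => f n p)
          (f n).continuous.continuousAt hξ'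
      exact mcp_eq_of_tendsto' hc (hy n)
    have h2 : g ξ = L₂ := by
      have hc : MapClusterPt (g ξ) atTop (fun m => g (x m)) :=
        MapClusterPt.continuousAt_comp hgc.continuousAt hξ'
      refine mcp_eq_of_tendsto' hc ?_
      have he : (fun m => g (x m)) = z := funext hgz
      rw [he]; exact hL₂
    have h1 : g ξ = L₁ := by
      have hc : MapClusterPt (g ξ) atTop (fun n => f n ξ) :=
        MapClusterPt.continuousAt_comp (f := fun p : X → ℝ => p ξ)
          (continuous_apply ξ).continuousAt hg
      refine mcp_eq_of_tendsto' hc ?_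
      have he : (fun n => f n ξ) = y := funext hfy
      rw [he]; exact hL₁
    rw [← h1, ← h2]
  · intro h
    obtain ⟨r, hr⟩ := hbdd
    set S : Set (X → ℝ) := Set.pi Set.univ (fun _ : X => Set.Icc (-r) r) with hS
    have hScpt : IsCompact S := isCompact_univ_pi fun _ => isCompact_Icc
    have hSclosed : IsClosed S := isClosed_set_pi fun _ _ => isClosed_Icc
    have hsub : (fun f : C(X, ℝ) => (f : X → ℝ)) '' A ⊆ S := by
      rintro _ ⟨f, hfA, rfl⟩
      intro p _
      exact abs_le.mp (hr f hfA p)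
    have hclsub : closure ((fun f : C(X, ℝ) => (f : X → ℝ)) '' A) ⊆ S :=
      closure_minimal hsub hSclosed
    constructor
    · exact hScpt.of_isClosed_subset isClosed_closure hclsub
    · intro g hg
      by_contra hgc
      rw [continuous_iff_continuousAt] at hgc
      push_neg at hgc
      obtain ⟨x₀, hx₀⟩ := hgc
      rw [Metric.continuousAt_iff'] at hx₀
      push_neg at hx₀
      obtain ⟨ε, hε, hev⟩ := hx₀
      have hd : ∀ U ∈ 𝓝 x₀, ∃ x ∈ U, ε ≤ |g x - g x₀| := by
        intro U hU
        by_contra hc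
        push_neg at hc
        exact hev (mem_of_superset hU fun x hx => by
          simpa [Real.dist_eq] using hc x hx)
      obtain ⟨f, x, hfA, hP0, hP1, hP2, hP3⟩ := grothendieck_construct A g hg x₀ ε hd
      have hgx : ∀ m, g (x m) ∈ Set.Icc (-r) r := fun m => hclsub hg (x m) trivial
      obtain ⟨L₂, _, φ, hφ, hL₂⟩ := isCompact_Icc.tendsto_subseq hgx
      have key : g x₀ = L₂ := by
        refine h f hfA (fun m => x (φ m)) (fun n => f n x₀) (fun k => g (x (φ k)))
          (g x₀) L₂ ?_ ?_ ?_ hL₂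
        · intro n
          refine tendsto_sub_nhds_zero_iff.mp (squeeze_zero_norm' ?_
            tendsto_one_div_add_atTop_nhds_zero_nat)
          filter_upwards [eventually_ge_atTop n] with m hm
          have h1 : n ≤ φ m := hm.trans hφ.le_apply
          have h2 : |f n (x (φ m)) - f n x₀| < 1 / (φ m + 1) := hP2 (φ m) n h1
          have h3 : (1 : ℝ) / (φ m + 1) ≤ 1 / (m + 1) := by
            apply one_div_le_one_div_of_le
            · positivity
            · have hmφ : (m : ℝ) ≤ φ m := Nat.cast_le.mpr hφ.le_apply
              linarith
          have := (le_of_lt h2).trans h3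
          simpa [Real.norm_eq_abs] using this
        · refine tendsto_sub_nhds_zero_iff.mp (squeeze_zero_norm' ?_
            tendsto_one_div_add_atTop_nhds_zero_nat)
          filter_upwards with n
          simpa [Real.norm_eq_abs] using (hP0 n).le
        · intro k
          refine tendsto_sub_nhds_zero_iff.mp (squeeze_zero_norm' ?_
            tendsto_one_div_add_atTop_nhds_zero_nat)
          filter_upwards [eventually_gt_atTop (φ k)] with n hn
          simpa [Real.norm_eq_abs] using (hP1 n (φ k) hn).le
      have hlim : Tendsto (fun k => |g (x (φ k)) - g x₀|) atTop (𝓝 |L₂ - g x₀|) :=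
        (hL₂.sub tendsto_const_nhds).abs
      have hfin : ε ≤ |L₂ - g x₀| :=
        ge_of_tendsto hlim (Eventually.of_forall fun k => hP3 (φ k))
      rw [← key] at hfin
      simp at hfin
      linarith
end

section
/- (Galvin–Prikry) Let [ℕ] denote the set of all infinite subsets of ℕ, viewed as a subspace of the Cantor space 2^ℕ (equivalently, topologized via the product topology on strictly increasing sequences of naturals). If 𝒜 ⊆ [ℕ] is Borel, then there exists an infinite set N ⊆ ℕ such that either every infinite subset of N belongs to 𝒜, or no infinite subset of N belongs to 𝒜. -/
open Filter Topology

namespace GP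

/-- `A` is an infinite subset of ℕ (as characteristic function). -/
def Inf (A : ℕ → Bool) : Prop := {n | A n = true}.Infinite

/-- `X ⊆ Y` pointwise. -/
def Sub (X Y : ℕ → Bool) : Prop := ∀ n, X n = true → Y n = true

lemma Sub.refl (X : ℕ → Bool) : Sub X X := fun _ h => h

lemma Sub.trans {X Y Z : ℕ → Bool} (h1 : Sub X Y) (h2 : Sub Y Z) : Sub X Z :=
  fun n h => h2 n (h1 n h)

/-- The Ellentuck-style basic set `[t, C]`: infinite sets `X` with `t ⊆ X ⊆ t ∪ C`. -/
def El (t : Finset ℕ) (C : ℕ → Bool) : Set (ℕ → Bool) :=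
  {X | Inf X ∧ (∀ n ∈ t, X n = true) ∧ ∀ n, X n = true → n ∈ t ∨ C n = true}

lemma El_mono {t : Finset ℕ} {C D : ℕ → Bool} (h : Sub C D) : El t C ⊆ El t D := by
  rintro X ⟨h1, h2, h3⟩
  exact ⟨h1, h2, fun n hn => (h3 n hn).imp id (h n)⟩

/-- Completely Ramsey. -/
def CR (𝒜 : Set (ℕ → Bool)) : Prop :=
  ∀ s A, Inf A → ∃ B, Inf B ∧ Sub B A ∧ ((El s B ⊆ 𝒜) ∨ ∀ X ∈ El s B, X ∉ 𝒜)

/-- remove elements `≤ m` -/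
def above (C : ℕ → Bool) (m : ℕ) : ℕ → Bool := fun n => C n && decide (m < n)

lemma above_sub (C : ℕ → Bool) (m : ℕ) : Sub (above C m) C := by
  intro n h
  simp [above] at h; exact h.1

lemma above_gt {C : ℕ → Bool} {m n : ℕ} (h : above C m n = true) : m < n := by
  simp [above] at h; exact h.2

lemma inf_above {C : ℕ → Bool} (h : Inf C) (m : ℕ) : Inf (above C m) := by
  have : {n | above C m n = true} = {n | C n = true} \ Set.Iic m := by
    ext n; simp [GP.above, Set.mem_diff, not_le]
  rw [Inf, this]
  exact h.diff (Set.finite_Iic m)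

lemma inf_exists_gt {C : ℕ → Bool} (h : Inf C) (m : ℕ) : ∃ n, C n = true ∧ m < n := by
  obtain ⟨n, hn⟩ := (inf_above h m).nonempty
  exact ⟨n, above_sub C m n hn, above_gt hn⟩

/-- remove a finite set -/
def minus (C : ℕ → Bool) (F : Finset ℕ) : ℕ → Bool := fun n => C n && decide (n ∉ F)

lemma minus_sub (C : ℕ → Bool) (F : Finset ℕ) : Sub (minus C F) C := by
  intro n h; simp [minus] at h; exact h.1

lemma minus_spec {C : ℕ → Bool} {F : Finset ℕ} {n : ℕ} :
    minus C F n = true ↔ C n = true ∧ n ∉ F := by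
  simp [minus]

lemma inf_minus {C : ℕ → Bool} (h : Inf C) (F : Finset ℕ) : Inf (GP.minus C F) := by
  have : {n | GP.minus C F n = true} = {n | C n = true} \ ↑F := by
    ext n; simp [GP.minus, Set.mem_diff]
  rw [Inf, this]
  exact h.diff F.finite_toSet

/-- `C` accepts `t` (into `𝒜`). -/
def Acc (𝒜 : Set (ℕ → Bool)) (t : Finset ℕ) (C : ℕ → Bool) : Prop := El t C ⊆ 𝒜

/-- `C` rejects `t`: no infinite subset of `C` accepts `t`. -/
def Rej (𝒜 : Set (ℕ → Bool)) (t : Finset ℕ) (C : ℕ → Bool) : Prop :=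
  ∀ D, Inf D → Sub D C → ¬ Acc 𝒜 t D

lemma Rej.mono {𝒜 t} {C C' : ℕ → Bool} (h : Rej 𝒜 t C) (hsub : Sub C' C) : Rej 𝒜 t C' :=
  fun D hD hDC => h D hD (hDC.trans hsub)

lemma Acc.mono {𝒜 t} {C C' : ℕ → Bool} (h : Acc 𝒜 t C) (hsub : Sub C' C) : Acc 𝒜 t C' :=
  fun X hX => h (El_mono hsub hX)

/-- If a cofinite part of `B` rejects `t` then `B` rejects `t`. -/
lemma Rej.of_minus {𝒜 t} {B : ℕ → Bool} {F : Finset ℕ} (h : Rej 𝒜 t (minus B F)) :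
    Rej 𝒜 t B := by
  intro D hD hDB hAcc
  exact h (minus D F) (inf_minus hD F)
    (fun n hn => minus_spec.2 ⟨hDB n (minus_spec.1 hn).1, (minus_spec.1 hn).2⟩)
    (hAcc.mono (minus_sub D F))

/-- Generic dependent-choice recursion producing a sequence with invariant `P`
and step relation `R`. -/
lemma nat_rec_exists {S : Type} (P : S → Prop) (R : S → S → Prop) (s0 : S) (h0 : P s0)
    (step : ∀ s, P s → ∃ s', P s' ∧ R s s') :
    ∃ f : ℕ → S, f 0 = s0 ∧ (∀ k, P (f k)) ∧ ∀ k, R (f k) (f (k+1)) := by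
  choose g hg1 hg2 using step
  let F : ℕ → {s // P s} := fun k => Nat.rec ⟨s0, h0⟩ (fun _ p => ⟨g p.1 p.2, hg1 p.1 p.2⟩) k
  exact ⟨fun k => (F k).1, rfl, fun k => (F k).2, fun k => hg2 (F k).1 (F k).2⟩


open Classical in
/-- Key claim: if `C` rejects `t`, there are `n ∈ C`, `n > m`, and an infinite
`C' ⊆ C` with all elements `> n`, such that `C'` rejects `insert n t`. -/
lemma claimB (𝒜 : Set (ℕ → Bool)) (t : Finset ℕ) (C : ℕ → Bool) (m : ℕ)
    (hC : Inf C) (hR : Rej 𝒜 t C) :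
    ∃ n C', C n = true ∧ m < n ∧ Inf C' ∧ Sub C' C ∧ (∀ x, C' x = true → n < x) ∧
      Rej 𝒜 (insert n t) C' := by
  by_contra hcon
  push_neg at hcon
  -- from the negation: every suitable (n, C') has an infinite accepting subset
  have neg : ∀ n, C n = true → m < n → ∀ C', Inf C' → Sub C' C → (∀ x, C' x = true → n < x) →
      ∃ D, Inf D ∧ Sub D C' ∧ Acc 𝒜 (insert n t) D := by
    intro n hn hmn C' h1 h2 h3
    have := hcon n C'
    by_contra hD
    push_neg at hD
    exact (this hn hmn h1 h2 h3) (fun D hDi hDs => hD D hDi hDs)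
  -- build a diagonal sequence
  let S := ℕ × (ℕ → Bool)
  let P : S → Prop := fun p =>
    C p.1 = true ∧ m < p.1 ∧ Inf p.2 ∧ Sub p.2 C ∧ (∀ x, p.2 x = true → p.1 < x) ∧
      Acc 𝒜 (insert p.1 t) p.2
  let R : S → S → Prop := fun p q => Sub q.2 p.2 ∧ p.2 q.1 = true
  -- initial state
  obtain ⟨n0, hn0C, hn0m⟩ := inf_exists_gt hC m
  obtain ⟨D0, hD0i, hD0s, hD0a⟩ := neg n0 hn0C hn0m (above C n0) (inf_above hC n0)
    (above_sub C n0) (fun x hx => above_gt hx)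
  have hP0 : P (n0, D0) := ⟨hn0C, hn0m, hD0i, hD0s.trans (above_sub C n0),
    fun x hx => above_gt (hD0s x hx), hD0a⟩
  -- step
  have step : ∀ p, P p → ∃ q, P q ∧ R p q := by
    rintro ⟨n, D⟩ ⟨h1, h2, h3, h4, h5, h6⟩
    obtain ⟨n', hn'D, hn'gt⟩ := inf_exists_gt h3 n
    obtain ⟨D', hD'i, hD's, hD'a⟩ := neg n' (h4 n' hn'D) (lt_trans h2 (h5 n' hn'D))
      (above D n') (inf_above h3 n') ((above_sub D n').trans h4) (fun x hx => above_gt hx)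
    refine ⟨(n', D'), ⟨h4 n' hn'D, lt_trans h2 (h5 n' hn'D), hD'i,
      (hD's.trans (above_sub D n')).trans h4,
      fun x hx => above_gt (hD's x hx), hD'a⟩, hD's.trans (above_sub D n'), hn'D⟩
  obtain ⟨f, hf0, hfP, hfR⟩ := nat_rec_exists P R (n0, D0) hP0 step
  set ν : ℕ → ℕ := fun k => (f k).1 with hν
  set Dk : ℕ → (ℕ → Bool) := fun k => (f k).2 with hDk
  have hmono : ∀ i j, i ≤ j → Sub (Dk j) (Dk i) := by
    intro i j hij
    induction j with
    | zero => cases Nat.le_zero.mp hij; exact Sub.refl _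
    | succ j ih =>
      rcases Nat.lt_or_ge i (j+1) with h | h
      · exact (hfR j).1.trans (ih (Nat.lt_succ_iff.mp h))
      · cases Nat.le_antisymm hij h; exact Sub.refl _
  have hνmem : ∀ j, 0 < j → Dk (j-1) (ν j) = true := by
    intro j hj
    have := (hfR (j-1)).2
    have hj' : j - 1 + 1 = j := Nat.succ_pred_eq_of_pos hj
    rwa [hj'] at this
  have hνlt : ∀ j k, j < k → ν j < ν k := by
    intro j k hjk
    have h1 : Dk (k-1) (ν k) = true := hνmem k (Nat.zero_lt_of_lt hjk)
    have h2 : Dk j (ν k) = true := hmono j (k-1) (Nat.le_pred_of_lt hjk) _ h1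
    exact (hfP j).2.2.2.2.1 _ h2
  -- the diagonal set
  set B : ℕ → Bool := fun x => decide (∃ j, ν j = x) with hB
  have hBmem : ∀ j, B (ν j) = true := fun j => by simp [hB]
  have hBinf : Inf B := by
    apply Set.infinite_of_injective_forall_mem
      (f := fun j : ℕ => ν j)
    · intro a b hab
      by_contra hne
      rcases Nat.lt_or_ge a b with h | h
      · exact absurd hab (Nat.ne_of_lt (hνlt a b h))
      · exact absurd hab.symm (Nat.ne_of_lt (hνlt b a (lt_of_le_of_ne h (Ne.symm hne))))
    · intro j; simpa using hBmem j
  have hBsub : Sub B C := by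
    intro x hx
    simp only [hB, decide_eq_true_eq] at hx
    obtain ⟨j, rfl⟩ := hx
    exact (hfP j).1
  -- B accepts t, contradiction with hR
  refine hR B hBinf hBsub ?_
  intro X hX
  obtain ⟨hXi, hXt, hXsub⟩ := hX
  -- find least index j with ν j ∈ X \ t
  have hex : ∃ j, X (ν j) = true ∧ ν j ∉ t := by
    -- X is infinite, t finite: X has an element outside t
    have : {x | X x = true}.Infinite := hXi
    obtain ⟨x, hx1, hx2⟩ := ((this.diff t.finite_toSet).nonempty)
    have := hXsub x hx1
    rcases this with h | h
    · exact absurd h hx2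
    · simp only [hB, decide_eq_true_eq] at h
      obtain ⟨j, rfl⟩ := h
      exact ⟨j, hx1, hx2⟩
  let j1 := Nat.find hex
  obtain ⟨hj1X, hj1t⟩ := Nat.find_spec hex
  have hmin : ∀ j, j < j1 → ¬(X (ν j) = true ∧ ν j ∉ t) := fun j h => Nat.find_min hex h
  -- X ∈ El (insert (ν j1) t) (Dk j1)
  have hacc : Acc 𝒜 (insert (ν j1) t) (Dk j1) := (hfP j1).2.2.2.2.2
  apply hacc
  refine ⟨hXi, ?_, ?_⟩
  · intro n hn
    rcases Finset.mem_insert.mp hn with rfl | hn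
    · exact hj1X
    · exact hXt n hn
  · intro x hx
    rcases hXsub x hx with h | h
    · exact Or.inl (Finset.mem_insert_of_mem h)
    · simp only [hB, decide_eq_true_eq] at h
      obtain ⟨j, rfl⟩ := h
      by_cases hjt : ν j ∈ t
      · exact Or.inl (Finset.mem_insert_of_mem hjt)
      · have hj1le : j1 ≤ j := by
          by_contra hlt
          exact hmin j (Nat.lt_of_not_le hlt) ⟨hx, hjt⟩
        rcases Nat.eq_or_lt_of_le hj1le with rfl | hlt
        · exact Or.inl (Finset.mem_insert_self _ _)
        · -- ν j ∈ Dk (j-1) ⊆ Dk j1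
          right
          exact hmono j1 (j-1) (Nat.le_pred_of_lt hlt) _
            (hνmem j (Nat.zero_lt_of_lt hlt))


open Classical in
/-- If `C` rejects `t`, there is an infinite `B ⊆ C` rejecting `insert n t` for all `n ∈ B`. -/
lemma L3 (𝒜 : Set (ℕ → Bool)) (t : Finset ℕ) (C : ℕ → Bool)
    (hC : Inf C) (hR : Rej 𝒜 t C) :
    ∃ B, Inf B ∧ Sub B C ∧ ∀ n, B n = true → Rej 𝒜 (insert n t) B := by
  let S := ℕ × (ℕ → Bool)
  let P : S → Prop := fun p =>
    C p.1 = true ∧ Inf p.2 ∧ Sub p.2 C ∧ (∀ x, p.2 x = true → p.1 < x) ∧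
      Rej 𝒜 (insert p.1 t) p.2
  let R : S → S → Prop := fun p q => Sub q.2 p.2 ∧ p.2 q.1 = true
  obtain ⟨n0, D0, hn0C, _, hD0i, hD0s, hD0gt, hD0r⟩ := claimB 𝒜 t C 0 hC hR
  have step : ∀ p, P p → ∃ q, P q ∧ R p q := by
    rintro ⟨n, D⟩ ⟨h1, h2, h3, h4, h5⟩
    obtain ⟨n', D', hn'D, _, hD'i, hD's, hD'gt, hD'r⟩ :=
      claimB 𝒜 t D n h2 (hR.mono h3)
    exact ⟨(n', D'), ⟨h3 n' hn'D, hD'i, hD's.trans h3, hD'gt, hD'r⟩, hD's, hn'D⟩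
  obtain ⟨f, hf0, hfP, hfR⟩ := nat_rec_exists P R (n0, D0) ⟨hn0C, hD0i, hD0s, hD0gt, hD0r⟩ step
  set ν : ℕ → ℕ := fun k => (f k).1 with hν
  set Dk : ℕ → (ℕ → Bool) := fun k => (f k).2 with hDk
  have hmono : ∀ i j, i ≤ j → Sub (Dk j) (Dk i) := by
    intro i j hij
    induction j with
    | zero => cases Nat.le_zero.mp hij; exact Sub.refl _
    | succ j ih =>
      rcases Nat.lt_or_ge i (j+1) with h | h
      · exact (hfR j).1.trans (ih (Nat.lt_succ_iff.mp h))
      · cases Nat.le_antisymm hij h; exact Sub.refl _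
  have hνmem : ∀ j, 0 < j → Dk (j-1) (ν j) = true := by
    intro j hj
    have := (hfR (j-1)).2
    have hj' : j - 1 + 1 = j := Nat.succ_pred_eq_of_pos hj
    rwa [hj'] at this
  have hνlt : ∀ j k, j < k → ν j < ν k := by
    intro j k hjk
    have h1 : Dk (k-1) (ν k) = true := hνmem k (Nat.zero_lt_of_lt hjk)
    exact (hfP j).2.2.2.1 _ (hmono j (k-1) (Nat.le_pred_of_lt hjk) _ h1)
  set B : ℕ → Bool := fun x => decide (∃ j, ν j = x) with hB
  have hνinj : Function.Injective ν := by
    intro a b hab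
    by_contra hne
    rcases Nat.lt_or_ge a b with h | h
    · exact absurd hab (Nat.ne_of_lt (hνlt a b h))
    · exact absurd hab.symm (Nat.ne_of_lt (hνlt b a (lt_of_le_of_ne h (Ne.symm hne))))
  have hBinf : Inf B := by
    apply Set.infinite_of_injective_forall_mem (f := fun j : ℕ => ν j) hνinj
    intro j; simp [hB]
  have hBsub : Sub B C := by
    intro x hx
    simp only [hB, decide_eq_true_eq] at hx
    obtain ⟨j, rfl⟩ := hx
    exact (hfP j).1
  refine ⟨B, hBinf, hBsub, ?_⟩
  intro n hn
  simp only [hB, decide_eq_true_eq] at hn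
  obtain ⟨j, rfl⟩ := hn
  -- tail of B beyond stage j is ⊆ Dk j
  have htail : Sub (minus B ((Finset.range (j+1)).image ν)) (Dk j) := by
    intro x hx
    obtain ⟨hxB, hxF⟩ := minus_spec.1 hx
    simp only [hB, decide_eq_true_eq] at hxB
    obtain ⟨i, rfl⟩ := hxB
    have hij : j < i := by
      by_contra h
      exact hxF (Finset.mem_image.2 ⟨i, Finset.mem_range.2 (Nat.lt_succ_of_le (Nat.le_of_not_lt h)), rfl⟩)
    exact hmono j (i-1) (Nat.le_pred_of_lt hij) _ (hνmem i (Nat.zero_lt_of_lt hij))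
  exact Rej.of_minus (((hfP j).2.2.2.2).mono htail)

/-- One fusion step for the open case: shrink `C` so that it rejects all
one-point extensions of all `t ∈ T`. -/
lemma stepEx (𝒜 : Set (ℕ → Bool)) (T : Finset (Finset ℕ)) (C : ℕ → Bool)
    (hC : Inf C) (hR : ∀ t ∈ T, Rej 𝒜 t C) :
    ∃ C', Inf C' ∧ Sub C' C ∧ ∀ t ∈ T, ∀ n, C' n = true → Rej 𝒜 (insert n t) C' := by
  induction T using Finset.induction_on generalizing C with
  | empty => exact ⟨C, hC, Sub.refl C, by simp⟩
  | @insert t T htT ih =>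
    obtain ⟨C₁, hC₁i, hC₁s, hC₁r⟩ := ih C hC (fun t' ht' => hR t' (Finset.mem_insert_of_mem ht'))
    obtain ⟨C₂, hC₂i, hC₂s, hC₂r⟩ := L3 𝒜 t C₁ hC₁i
      ((hR t (Finset.mem_insert_self t T)).mono hC₁s)
    refine ⟨C₂, hC₂i, hC₂s.trans hC₁s, ?_⟩
    intro t' ht' n hn
    rcases Finset.mem_insert.mp ht' with rfl | ht'
    · exact hC₂r n hn
    · exact (hC₁r t' ht' n (hC₂s n hn)).mono hC₂s


lemma exists_cyl {U : Set (ℕ → Bool)} (hU : IsOpen U) {X : ℕ → Bool} (hX : X ∈ U) :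
    ∃ m, ∀ Y : ℕ → Bool, (∀ i, i ≤ m → Y i = X i) → Y ∈ U := by
  obtain ⟨I, u, h1, h2⟩ := isOpen_pi_iff.mp hU X hX
  refine ⟨I.sup id, fun Y hY => h2 ?_⟩
  intro i hi
  rw [hY i (Finset.le_sup (f := id) hi)]
  exact (h1 i hi).2

lemma isOpen_of_cyl {U : Set (ℕ → Bool)}
    (h : ∀ X ∈ U, ∃ m, ∀ Y : ℕ → Bool, (∀ i, i ≤ m → Y i = X i) → Y ∈ U) : IsOpen U := by
  rw [isOpen_iff_mem_nhds]
  intro X hX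
  obtain ⟨m, hm⟩ := h X hX
  have hC : IsOpen {Y : ℕ → Bool | ∀ i, i ≤ m → Y i = X i} := by
    have heq : {Y : ℕ → Bool | ∀ i, i ≤ m → Y i = X i} =
        ⋂ i ∈ Finset.range (m+1), (fun Y : ℕ → Bool => Y i) ⁻¹' {X i} := by
      ext Y; simp [Nat.lt_succ_iff]
    rw [heq]
    exact isOpen_biInter_finset fun i _ =>
      (continuous_apply i).isOpen_preimage _ (isOpen_discrete _)
  exact Filter.mem_of_superset (hC.mem_nhds (fun i hi => rfl)) (fun Y hY => hm Y hY)

open Classical in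
/-- Open sets are completely Ramsey. -/
lemma open_CR (𝒜 : Set (ℕ → Bool)) (h𝒜 : IsOpen 𝒜) : CR 𝒜 := by
  intro s A hA
  by_cases hacc : ∃ B, Inf B ∧ Sub B A ∧ Acc 𝒜 s B
  · obtain ⟨B, h1, h2, h3⟩ := hacc
    exact ⟨B, h1, h2, Or.inl h3⟩
  -- otherwise A rejects s
  have hRej : Rej 𝒜 s A := by
    intro D hD hDs hDa
    exact hacc ⟨D, hD, hDs, hDa⟩
  set A₁ : ℕ → Bool := above A (s.sup id) with hA₁
  have hA₁i : Inf A₁ := inf_above hA (s.sup id)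
  have hA₁s : Sub A₁ A := above_sub A (s.sup id)
  have hA₁ns : ∀ x, A₁ x = true → x ∉ s := by
    intro x hx hxs
    exact absurd (Finset.le_sup (f := id) hxs) (not_le.mpr (above_gt hx))
  -- fusion
  let S := (ℕ → Bool) × Finset ℕ
  let P : S → Prop := fun p =>
    Inf p.1 ∧ Sub p.1 A₁ ∧ (∀ n, p.1 n = true → ∀ x ∈ p.2, x < n) ∧
      (∀ x ∈ p.2, A₁ x = true) ∧
      ∀ t : Finset ℕ, s ⊆ t → t ⊆ s ∪ p.2 → Rej 𝒜 t p.1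
  let R : S → S → Prop := fun p q =>
    Sub q.1 p.1 ∧ ∃ ν, q.2 = insert ν p.2 ∧ p.1 ν = true ∧ ∀ x, q.1 x = true → ν < x
  have hP0 : P (A₁, ∅) := by
    refine ⟨hA₁i, Sub.refl _, by simp, by simp, ?_⟩
    intro t hst hts
    have : t = s := Finset.Subset.antisymm (by simpa using hts) hst
    subst this
    exact hRej.mono hA₁s
  have step : ∀ p, P p → ∃ q, P q ∧ R p q := by
    rintro ⟨C, p⟩ ⟨h1, h2, h3, h4, h5⟩
    set T : Finset (Finset ℕ) := (s ∪ p).powerset.filter (fun u => s ⊆ u) with hT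
    have hTmem : ∀ t, t ∈ T ↔ (t ⊆ s ∪ p ∧ s ⊆ t) := by
      intro t
      rw [hT, Finset.mem_filter, Finset.mem_powerset]
    obtain ⟨C₁, hC₁i, hC₁s, hC₁r⟩ := stepEx 𝒜 T C h1
      (fun t ht => h5 t ((hTmem t).1 ht).2 ((hTmem t).1 ht).1)
    obtain ⟨ν, hνC₁, _⟩ := inf_exists_gt hC₁i 0
    set C' : ℕ → Bool := above C₁ ν with hC'
    have hC's : Sub C' C₁ := above_sub C₁ ν
    have hνns : ν ∉ s := hA₁ns ν (h2 ν (hC₁s ν hνC₁))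
    refine ⟨(C', insert ν p), ⟨inf_above hC₁i ν, (hC's.trans hC₁s).trans h2, ?_, ?_, ?_⟩,
      hC's.trans hC₁s, ν, rfl, hC₁s ν hνC₁, fun x hx => above_gt hx⟩
    · intro n hn x hx
      rcases Finset.mem_insert.mp hx with rfl | hx
      · exact above_gt hn
      · exact h3 n (hC₁s n (hC's n hn)) x hx
    · intro x hx
      rcases Finset.mem_insert.mp hx with rfl | hx
      · exact h2 x (hC₁s x hνC₁)
      · exact h4 x hx
    · intro t hst hts
      by_cases hνt : ν ∈ t
      · have ht' : t.erase ν ∈ T := by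
          rw [hTmem]
          constructor
          · intro x hx
            have hxt := Finset.mem_of_mem_erase hx
            rcases Finset.mem_union.mp (hts hxt) with h | h
            · exact Finset.mem_union_left _ h
            · rcases Finset.mem_insert.mp h with rfl | h
              · exact absurd rfl (Finset.ne_of_mem_erase hx)
              · exact Finset.mem_union_right _ h
          · intro x hx
            exact Finset.mem_erase.2 ⟨fun he => hνns (he ▸ hx), hst hx⟩
        have := hC₁r _ ht' ν hνC₁
        rw [Finset.insert_erase hνt] at this
        exact this.mono hC's
      · have hts' : t ⊆ s ∪ p := by
          intro x hx
          rcases Finset.mem_union.mp (hts hx) with h | h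
          · exact Finset.mem_union_left _ h
          · rcases Finset.mem_insert.mp h with rfl | h
            · exact absurd hx hνt
            · exact Finset.mem_union_right _ h
        exact (h5 t hst hts').mono (hC's.trans hC₁s)
  obtain ⟨f, hf0, hfP, hfR⟩ := nat_rec_exists P R (A₁, ∅) hP0 step
  set Ck : ℕ → (ℕ → Bool) := fun k => (f k).1 with hCk
  set pk : ℕ → Finset ℕ := fun k => (f k).2 with hpk
  choose ν hν1 hν2 hν3 using fun k => (hfR k).2
  have hCmono : ∀ i j, i ≤ j → Sub (Ck j) (Ck i) := by
    intro i j hij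
    induction j with
    | zero => cases Nat.le_zero.mp hij; exact Sub.refl _
    | succ j ih =>
      rcases Nat.lt_or_ge i (j+1) with h | h
      · exact (hfR j).1.trans (ih (Nat.lt_succ_iff.mp h))
      · cases Nat.le_antisymm hij h; exact Sub.refl _
  have hp0 : pk 0 = ∅ := by show (f 0).2 = ∅; rw [hf0]
  have hpmem : ∀ k x, x ∈ pk k ↔ ∃ j, j < k ∧ ν j = x := by
    intro k
    induction k with
    | zero => intro x; simp [hp0]
    | succ k ih =>
      intro x
      rw [show pk (k+1) = insert (ν k) (pk k) from hν1 k]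
      simp only [Finset.mem_insert, ih]
      constructor
      · rintro (rfl | ⟨j, hj, rfl⟩)
        · exact ⟨k, Nat.lt_succ_self k, rfl⟩
        · exact ⟨j, Nat.lt_succ_of_lt hj, rfl⟩
      · rintro ⟨j, hj, rfl⟩
        rcases Nat.lt_succ_iff_lt_or_eq.mp hj with h | rfl
        · exact Or.inr ⟨j, h, rfl⟩
        · exact Or.inl rfl
  have hνCk : ∀ k, Ck k (ν k) = true := hν2
  have hνlt : ∀ k, ν k < ν (k+1) := by
    intro k
    have h1 : Ck (k+1) (ν (k+1)) = true := hνCk (k+1)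
    have h2 := (hfP (k+1)).2.2.1 (ν (k+1)) h1
    exact h2 (ν k) ((hpmem (k+1) (ν k)).2 ⟨k, Nat.lt_succ_self k, rfl⟩)
  have hνsm : StrictMono ν := strictMono_nat_of_lt_succ hνlt
  set B : ℕ → Bool := fun x => decide (∃ j, ν j = x) with hB
  have hBinf : Inf B := by
    apply Set.infinite_of_injective_forall_mem (f := fun j : ℕ => ν j) hνsm.injective
    intro j; simp [hB]
  have hBsub : Sub B A := by
    intro x hx
    simp only [hB, decide_eq_true_eq] at hx
    obtain ⟨j, rfl⟩ := hx
    exact hA₁s _ ((hfP j).2.1 _ (hνCk j))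
  -- B rejects every finite t with s ⊆ t ⊆ s ∪ B
  have hBrej : ∀ t : Finset ℕ, s ⊆ t → (∀ x ∈ t, x ∉ s → B x = true) → Rej 𝒜 t B := by
    intro t hst htB
    set K := t.sup id + 1 with hK
    have htsp : t ⊆ s ∪ pk K := by
      intro x hx
      by_cases hxs : x ∈ s
      · exact Finset.mem_union_left _ hxs
      · have hxB := htB x hx hxs
        simp only [hB, decide_eq_true_eq] at hxB
        obtain ⟨j, rfl⟩ := hxB
        refine Finset.mem_union_right _ ((hpmem K _).2 ⟨j, ?_, rfl⟩)
        calc j ≤ ν j := hνsm.le_apply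
        _ ≤ t.sup id := Finset.le_sup (f := id) hx
        _ < K := Nat.lt_succ_self _
    have hrejK : Rej 𝒜 t (Ck K) := (hfP K).2.2.2.2 t hst htsp
    apply Rej.of_minus (F := pk K)
    apply hrejK.mono
    intro x hx
    obtain ⟨hxB, hxp⟩ := minus_spec.1 hx
    simp only [hB, decide_eq_true_eq] at hxB
    obtain ⟨j, rfl⟩ := hxB
    have hjK : K ≤ j := by
      by_contra h
      exact hxp ((hpmem K _).2 ⟨j, Nat.lt_of_not_le h, rfl⟩)
    exact hCmono K j hjK _ (hνCk j)
  -- conclude: El s B misses 𝒜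
  refine ⟨B, hBinf, hBsub, Or.inr ?_⟩
  rintro X ⟨hXi, hXs, hXsub⟩ hX𝒜
  obtain ⟨m₀, hm₀⟩ := exists_cyl h𝒜 hX𝒜
  set m := max m₀ (s.sup id) with hm
  set t : Finset ℕ := s ∪ (Finset.range (m+1)).filter (fun i => X i = true) with ht
  have hstt : s ⊆ t := Finset.subset_union_left
  have htB : ∀ x ∈ t, x ∉ s → B x = true := by
    intro x hx hxs
    rcases Finset.mem_union.mp hx with h | h
    · exact absurd h hxs
    · obtain ⟨_, hXx⟩ := Finset.mem_filter.mp h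
      rcases hXsub x hXx with h' | h'
      · exact absurd h' hxs
      · exact h'
  have hrej := hBrej t hstt htB
  apply hrej (above B m) (inf_above hBinf m) (above_sub B m)
  rintro Y ⟨hYi, hYt, hYsub⟩
  apply hm₀
  intro i hi
  have him : i ≤ m := le_trans hi (le_max_left _ _)
  cases hXicase : X i with
  | true =>
    have hit : i ∈ t := by
      by_cases his : i ∈ s
      · exact hstt his
      · exact Finset.mem_union_right _
          (Finset.mem_filter.2 ⟨Finset.mem_range.2 (Nat.lt_succ_of_le him), hXicase⟩)
    exact hYt i hit
  | false =>
    cases hYicase : Y i with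
    | true =>
      exfalso
      rcases hYsub i hYicase with h | h
      · rcases Finset.mem_union.mp h with h' | h'
        · rw [hXs i h'] at hXicase; exact Bool.noConfusion hXicase
        · rw [(Finset.mem_filter.mp h').2] at hXicase
          exact Bool.noConfusion hXicase
      · exact absurd (above_gt h) (not_lt.mpr him)
    | false => rfl


/-- One fusion step for unions: decide finitely many tasks `(t, i)`. -/
lemma stepEx2 {𝒜 : ℕ → Set (ℕ → Bool)} (h : ∀ i, CR (𝒜 i))
    (T : Finset (Finset ℕ × ℕ)) (C : ℕ → Bool) (hC : Inf C) :
    ∃ C', Inf C' ∧ Sub C' C ∧ ∀ q ∈ T,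
      (El q.1 C' ⊆ 𝒜 q.2 ∨ ∀ X ∈ El q.1 C', X ∉ 𝒜 q.2) := by
  induction T using Finset.induction_on generalizing C with
  | empty => exact ⟨C, hC, Sub.refl C, by simp⟩
  | @insert q T hqT ih =>
    obtain ⟨C₁, hC₁i, hC₁s, hC₁d⟩ := ih C hC
    obtain ⟨C₂, hC₂i, hC₂s, hC₂d⟩ := h q.2 q.1 C₁ hC₁i
    refine ⟨C₂, hC₂i, hC₂s.trans hC₁s, ?_⟩
    intro q' hq'
    rcases Finset.mem_insert.mp hq' with rfl | hq'
    · exact hC₂d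
    · rcases hC₁d q' hq' with hd | hd
      · exact Or.inl (fun X hX => hd (El_mono hC₂s hX))
      · exact Or.inr (fun X hX => hd X (El_mono hC₂s hX))

open Classical in
/-- Countable unions of completely Ramsey sets are completely Ramsey. -/
lemma iUnion_CR (𝒜 : ℕ → Set (ℕ → Bool)) (h : ∀ i, CR (𝒜 i)) : CR (⋃ i, 𝒜 i) := by
  intro s A hA
  -- fusion
  let S := (ℕ → Bool) × Finset ℕ
  let P : S → Prop := fun p =>
    Inf p.1 ∧ Sub p.1 A ∧ (∀ n, p.1 n = true → ∀ x ∈ p.2, x < n) ∧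
      ∀ x ∈ p.2, A x = true
  let R : S → S → Prop := fun p q =>
    Sub q.1 p.1 ∧ ∃ ν D, q.2 = insert ν p.2 ∧ Sub q.1 D ∧ Sub D p.1 ∧ D ν = true ∧
      (∀ x, q.1 x = true → ν < x) ∧
      ∀ (t : Finset ℕ) (i : ℕ), s ⊆ t → t ⊆ s ∪ p.2 → i ≤ p.2.card →
        (El t D ⊆ 𝒜 i ∨ ∀ X ∈ El t D, X ∉ 𝒜 i)
  have hP0 : P (A, ∅) := ⟨hA, Sub.refl _, by simp, by simp⟩
  have step : ∀ p, P p → ∃ q, P q ∧ R p q := by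
    rintro ⟨C, p⟩ ⟨h1, h2, h3, h4⟩
    set T : Finset (Finset ℕ × ℕ) :=
      ((s ∪ p).powerset.filter (fun u => s ⊆ u)) ×ˢ (Finset.range (p.card + 1)) with hT
    obtain ⟨D, hDi, hDs, hDd⟩ := stepEx2 h T C h1
    obtain ⟨ν, hνD, _⟩ := inf_exists_gt hDi 0
    set C' : ℕ → Bool := above D ν with hC'
    refine ⟨(C', insert ν p), ⟨inf_above hDi ν, ((above_sub D ν).trans hDs).trans h2, ?_, ?_⟩,
      (above_sub D ν).trans hDs, ν, D, rfl, above_sub D ν, hDs, hνD,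
      fun x hx => above_gt hx, ?_⟩
    · intro n hn x hx
      rcases Finset.mem_insert.mp hx with rfl | hx
      · exact above_gt hn
      · exact h3 n (hDs n (above_sub D ν n hn)) x hx
    · intro x hx
      rcases Finset.mem_insert.mp hx with rfl | hx
      · exact h2 x (hDs x hνD)
      · exact h4 x hx
    · intro t i hst hts hi
      refine hDd (t, i) ?_
      rw [hT, Finset.mem_product]
      exact ⟨Finset.mem_filter.2 ⟨Finset.mem_powerset.2 hts, hst⟩,
        Finset.mem_range.2 (Nat.lt_succ_of_le hi)⟩
  obtain ⟨f, hf0, hfP, hfR⟩ := nat_rec_exists P R (A, ∅) hP0 step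
  set Ck : ℕ → (ℕ → Bool) := fun k => (f k).1 with hCk
  set pk : ℕ → Finset ℕ := fun k => (f k).2 with hpk
  choose ν D hν1 hν2 hν3 hν4 hν5 hν6 using fun k => (hfR k).2
  have hCmono : ∀ i j, i ≤ j → Sub (Ck j) (Ck i) := by
    intro i j hij
    induction j with
    | zero => cases Nat.le_zero.mp hij; exact Sub.refl _
    | succ j ih =>
      rcases Nat.lt_or_ge i (j+1) with h | h
      · exact (hfR j).1.trans (ih (Nat.lt_succ_iff.mp h))
      · cases Nat.le_antisymm hij h; exact Sub.refl _
  have hp0 : pk 0 = ∅ := by show (f 0).2 = ∅; rw [hf0]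
  have hpmem : ∀ k x, x ∈ pk k ↔ ∃ j, j < k ∧ ν j = x := by
    intro k
    induction k with
    | zero => intro x; simp [hp0]
    | succ k ih =>
      intro x
      rw [show pk (k+1) = insert (ν k) (pk k) from hν1 k]
      simp only [Finset.mem_insert, ih]
      constructor
      · rintro (rfl | ⟨j, hj, rfl⟩)
        · exact ⟨k, Nat.lt_succ_self k, rfl⟩
        · exact ⟨j, Nat.lt_succ_of_lt hj, rfl⟩
      · rintro ⟨j, hj, rfl⟩
        rcases Nat.lt_succ_iff_lt_or_eq.mp hj with h' | rfl
        · exact Or.inr ⟨j, h', rfl⟩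
        · exact Or.inl rfl
  have hνCk : ∀ k, Ck k (ν k) = true := fun k => hν3 k _ (hν4 k)
  have hνlt : ∀ k, ν k < ν (k+1) := fun k => hν5 k _ (hνCk (k+1))
  have hνsm : StrictMono ν := strictMono_nat_of_lt_succ hνlt
  set B : ℕ → Bool := fun x => decide (∃ j, ν j = x) with hB
  have hBinf : Inf B := by
    apply Set.infinite_of_injective_forall_mem (f := fun j : ℕ => ν j) hνsm.injective
    intro j; simp [hB]
  have hBsub : Sub B A := by
    intro x hx
    simp only [hB, decide_eq_true_eq] at hx
    obtain ⟨j, rfl⟩ := hx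
    exact (hfP j).2.1 _ (hνCk j)
  have hpcard : ∀ k, (pk k).card = k := by
    intro k
    induction k with
    | zero => simp [hp0]
    | succ k ih =>
      rw [show pk (k+1) = insert (ν k) (pk k) from hν1 k, Finset.card_insert_of_notMem, ih]
      intro hmem
      exact absurd ((hfP k).2.2.1 (ν k) (hνCk k) (ν k) hmem) (lt_irrefl _)
  -- the key decidedness property of B
  have hstar : ∀ (K : ℕ) (t : Finset ℕ) (i : ℕ), s ⊆ t → t ⊆ s ∪ pk K → i ≤ K →
      (El t (minus B (pk K)) ⊆ 𝒜 i ∨ ∀ X ∈ El t (minus B (pk K)), X ∉ 𝒜 i) := by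
    intro K t i hst hts hiK
    have hdec := hν6 K t i hst hts (by rw [hpcard K]; exact hiK)
    have hsubD : Sub (minus B (pk K)) (D K) := by
      intro x hx
      obtain ⟨hxB, hxp⟩ := minus_spec.1 hx
      simp only [hB, decide_eq_true_eq] at hxB
      obtain ⟨j, rfl⟩ := hxB
      have hjK : K ≤ j := by
        by_contra hc
        exact hxp ((hpmem K _).2 ⟨j, Nat.lt_of_not_le hc, rfl⟩)
      rcases Nat.eq_or_lt_of_le hjK with heq | hlt
      · subst heq; exact hν4 K
      · exact hν2 K _ (hCmono (K+1) j hlt _ (hνCk j))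
    rcases hdec with hd | hd
    · exact Or.inl (fun X hX => hd (El_mono hsubD hX))
    · exact Or.inr (fun X hX => hd X (El_mono hsubD hX))
  -- the auxiliary open set 𝒢
  set 𝒢 : Set (ℕ → Bool) := {X | ∃ m K i, i ≤ K ∧ (∀ x ∈ pk K, x ≤ m) ∧
      (s ∪ (Finset.range (m+1)).filter (fun n => X n = true)) ⊆ s ∪ pk K ∧
      El (s ∪ (Finset.range (m+1)).filter (fun n => X n = true)) (minus B (pk K)) ⊆ 𝒜 i}
    with h𝒢
  have h𝒢open : IsOpen 𝒢 := by
    apply isOpen_of_cyl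
    rintro X ⟨m, K, i, hiK, hpm, hts, hEl⟩
    refine ⟨m, fun Y hY => ⟨m, K, i, hiK, hpm, ?_⟩⟩
    have hfilter : (Finset.range (m+1)).filter (fun n => Y n = true) =
        (Finset.range (m+1)).filter (fun n => X n = true) := by
      apply Finset.filter_congr
      intro n hn
      rw [hY n (Nat.lt_succ_iff.mp (Finset.mem_range.mp hn))]
    rw [hfilter]
    exact ⟨hts, hEl⟩
  -- apply the open case to 𝒢 inside B
  obtain ⟨N, hNi, hNs, hNd⟩ := open_CR 𝒢 h𝒢open s B hBinf
  refine ⟨N, hNi, hNs.trans hBsub, ?_⟩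
  rcases hNd with hleft | hright
  · -- El s N ⊆ 𝒢 : then El s N ⊆ ⋃ 𝒜
    left
    rintro X hX
    obtain ⟨hXi, hXs, hXsub⟩ := hX
    obtain ⟨m, K, i, hiK, hpm, hts, hEl⟩ := hleft ⟨hXi, hXs, hXsub⟩
    refine Set.mem_iUnion.2 ⟨i, hEl ?_⟩
    set t := s ∪ (Finset.range (m+1)).filter (fun n => X n = true) with htdef
    refine ⟨hXi, ?_, ?_⟩
    · intro n hn
      rcases Finset.mem_union.mp hn with h' | h'
      · exact hXs n h'
      · exact (Finset.mem_filter.mp h').2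
    · intro x hx
      by_cases hxm : x ≤ m
      · exact Or.inl (Finset.mem_union_right _
          (Finset.mem_filter.2 ⟨Finset.mem_range.2 (Nat.lt_succ_of_le hxm), hx⟩))
      · by_cases hxs : x ∈ s
        · exact Or.inl (Finset.mem_union_left _ hxs)
        · right
          rcases hXsub x hx with h' | h'
          · exact absurd h' hxs
          · refine minus_spec.2 ⟨hNs x h', ?_⟩
            intro hxp
            exact hxm (hpm x hxp)
  · -- El s N ∩ 𝒢 = ∅ : then El s N misses ⋃ 𝒜
    right
    rintro X hX hXU
    obtain ⟨hXi, hXs, hXsub⟩ := hX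
    obtain ⟨i, hXi𝒜⟩ := Set.mem_iUnion.mp hXU
    apply hright X ⟨hXi, hXs, hXsub⟩
    -- find an element of X \ s above ν i
    set X' : ℕ → Bool := fun x => X x && decide (x ∉ s) with hX'
    have hX'i : Inf X' := by
      have : {n | X' n = true} = {n | X n = true} \ ↑s := by
        ext n; simp [hX', Set.mem_diff]
      rw [Inf, this]
      exact hXi.diff s.finite_toSet
    obtain ⟨x, hxX', hxgt⟩ := inf_exists_gt hX'i (ν i)
    obtain ⟨hxX, hxs⟩ : X x = true ∧ x ∉ s := by
      constructor <;> [skip; skip] <;> simp [hX'] at hxX' <;> tauto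
    have hxB : B x = true := by
      rcases hXsub x hxX with h' | h'
      · exact absurd h' hxs
      · exact hNs x h'
    obtain ⟨k, rfl⟩ : ∃ k, ν k = x := by
      simpa [hB, decide_eq_true_eq] using hxB
    have hik : i < k := hνsm.lt_iff_lt.mp hxgt
    set m := ν k with hm
    set K := k + 1 with hK
    set t := s ∪ (Finset.range (m+1)).filter (fun n => X n = true) with htdef
    have hpm : ∀ y ∈ pk K, y ≤ m := by
      intro y hy
      obtain ⟨j, hj, rfl⟩ := (hpmem K y).1 hy
      exact hνsm.monotone (Nat.lt_succ_iff.mp hj)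
    have hts : t ⊆ s ∪ pk K := by
      intro y hy
      rcases Finset.mem_union.mp hy with h' | h'
      · exact Finset.mem_union_left _ h'
      · obtain ⟨hyr, hyX⟩ := Finset.mem_filter.mp h'
        by_cases hys : y ∈ s
        · exact Finset.mem_union_left _ hys
        · have hyB : B y = true := by
            rcases hXsub y hyX with h'' | h''
            · exact absurd h'' hys
            · exact hNs y h''
          obtain ⟨j, rfl⟩ : ∃ j, ν j = y := by
            simpa [hB, decide_eq_true_eq] using hyB
          have : ν j ≤ ν k := Nat.lt_succ_iff.mp (Finset.mem_range.mp hyr)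
          refine Finset.mem_union_right _ ((hpmem K _).2 ⟨j, ?_, rfl⟩)
          exact Nat.lt_succ_of_le (hνsm.le_iff_le.mp this)
    have hXmem : X ∈ El t (minus B (pk K)) := by
      refine ⟨hXi, ?_, ?_⟩
      · intro n hn
        rcases Finset.mem_union.mp hn with h' | h'
        · exact hXs n h'
        · exact (Finset.mem_filter.mp h').2
      · intro y hy
        by_cases hym : y ≤ m
        · exact Or.inl (Finset.mem_union_right _
            (Finset.mem_filter.2 ⟨Finset.mem_range.2 (Nat.lt_succ_of_le hym), hy⟩))
        · by_cases hys : y ∈ s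
          · exact Or.inl (Finset.mem_union_left _ hys)
          · right
            have hyB : B y = true := by
              rcases hXsub y hy with h'' | h''
              · exact absurd h'' hys
              · exact hNs y h''
            refine minus_spec.2 ⟨hyB, ?_⟩
            intro hyp
            exact hym (hpm y hyp)
    rcases hstar K t i (Finset.subset_union_left) hts (Nat.le_of_lt (Nat.lt_succ_of_lt hik))
      with hd | hd
    · exact ⟨m, K, i, Nat.le_of_lt (Nat.lt_succ_of_lt hik), hpm, hts, hd⟩
    · exact absurd hXi𝒜 (hd X hXmem)

end GP

lemma compl_CR {𝒜 : Set (ℕ → Bool)} (h : GP.CR 𝒜) : GP.CR 𝒜ᶜ := by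
  intro s A hA
  obtain ⟨B, h1, h2, h3⟩ := h s A hA
  refine ⟨B, h1, h2, ?_⟩
  rcases h3 with h3 | h3
  · exact Or.inr (fun X hX hXc => hXc (h3 hX))
  · exact Or.inl (fun X hX => h3 X hX)

lemma empty_CR : GP.CR (∅ : Set (ℕ → Bool)) := by
  intro s A hA
  exact ⟨A, hA, GP.Sub.refl A, Or.inr (fun X _ hX => hX)⟩

lemma borel_CR (𝒜 : Set (ℕ → Bool))
    (hBorel : @MeasurableSet (ℕ → Bool) (borel (ℕ → Bool)) 𝒜) : GP.CR 𝒜 := by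
  have h : MeasurableSpace.GenerateMeasurable {s : Set (ℕ → Bool) | IsOpen s} 𝒜 := hBorel
  induction h with
  | basic u hu => exact GP.open_CR u hu
  | empty => exact empty_CR
  | compl u hu ih => exact compl_CR (ih hu)
  | iUnion f hf ih => exact GP.iUnion_CR f (fun i => ih i (hf i))

theorem galvin_prikry' (𝒜 : Set (ℕ → Bool))
    (hBorel : @MeasurableSet (ℕ → Bool) (borel (ℕ → Bool)) 𝒜) :
    ∃ N : ℕ → Bool, {n | N n = true}.Infinite ∧
      ((∀ M : ℕ → Bool, {n | M n = true}.Infinite →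
          (∀ n, M n = true → N n = true) → M ∈ 𝒜) ∨
        (∀ M : ℕ → Bool, {n | M n = true}.Infinite →
          (∀ n, M n = true → N n = true) → M ∉ 𝒜)) := by
  obtain ⟨B, h1, h2, h3⟩ := borel_CR 𝒜 hBorel ∅ (fun _ => true)
    (Set.infinite_of_injective_forall_mem (f := fun n : ℕ => n)
      (fun a b h => h) (fun n => rfl))
  refine ⟨B, h1, ?_⟩
  rcases h3 with h3 | h3
  · left
    intro M hMi hMs
    exact h3 ⟨hMi, by simp, fun n hn => Or.inr (hMs n hn)⟩
  · right
    intro M hMi hMs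
    exact h3 M ⟨hMi, by simp, fun n hn => Or.inr (hMs n hn)⟩


/-- Galvin–Prikry theorem: if `𝒜` is a Borel subset of the Cantor space `2^ℕ`
(identifying a subset of `ℕ` with its characteristic function), then there is an
infinite set `N ⊆ ℕ` such that either every infinite subset of `N` belongs to `𝒜`
or no infinite subset of `N` belongs to `𝒜`. -/
theorem galvin_prikry (𝒜 : Set (ℕ → Bool))
    (hBorel : @MeasurableSet (ℕ → Bool) (borel (ℕ → Bool)) 𝒜) :
    ∃ N : ℕ → Bool, {n | N n = true}.Infinite ∧
      ((∀ M : ℕ → Bool, {n | M n = true}.Infinite →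
          (∀ n, M n = true → N n = true) → M ∈ 𝒜) ∨
        (∀ M : ℕ → Bool, {n | M n = true}.Infinite →
          (∀ n, M n = true → N n = true) → M ∉ 𝒜)) := by
  exact galvin_prikry' 𝒜 hBorel
end

section
/- Let X be a compact topological space and let F be a norm-bounded subset of C(X). Then the following are equivalent: (i) F does not contain an independent sequence; (ii) every sequence in F has a subsequence that converges pointwise (i.e., converges in the product space ℝ^X). -/
open Filter Topology

namespace RosenthalAux

variable {X : Type*} (A B : ℕ → Set X)

/-- `x` alternates infinitely along `L`. -/
def Alt (x : X) (L : Set ℕ) : Prop :=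
  {n | n ∈ L ∧ x ∈ A n}.Infinite ∧ {n | n ∈ L ∧ x ∈ B n}.Infinite

/-- `Y` is big for `L`. -/
def Big (Y : Set X) (L : Set ℕ) : Prop :=
  ∀ L' ⊆ L, L'.Infinite → ∃ x ∈ Y, Alt A B x L'

variable {A B}

lemma Alt.mono {x : X} {L L' : Set ℕ} (h : Alt A B x L) (hsub : L ⊆ L') : Alt A B x L' :=
  ⟨h.1.mono fun n hn => ⟨hsub hn.1, hn.2⟩, h.2.mono fun n hn => ⟨hsub hn.1, hn.2⟩⟩

lemma Alt.diff {x : X} {L F : Set ℕ} (h : Alt A B x L) (hF : F.Finite) :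
    Alt A B x (L \ F) := by
  constructor
  · exact ((h.1.diff hF).mono (by rintro n ⟨⟨h1, h2⟩, h3⟩; exact ⟨⟨h1, h3⟩, h2⟩))
  · exact ((h.2.diff hF).mono (by rintro n ⟨⟨h1, h2⟩, h3⟩; exact ⟨⟨h1, h3⟩, h2⟩))

lemma Big.mono {Y : Set X} {L L' : Set ℕ} (h : Big A B Y L) (hsub : L' ⊆ L) :
    Big A B Y L' := fun M hM hMi => h M (hM.trans hsub) hMi

lemma Big.nonempty {Y : Set X} {L : Set ℕ} (h : Big A B Y L) (hL : L.Infinite) :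
    Y.Nonempty := by
  obtain ⟨x, hx, -⟩ := h L subset_rfl hL
  exact ⟨x, hx⟩

lemma claim2 {ι : Type*} [Finite ι] (Y : ι → Set X) (L : Set ℕ) (hL : L.Infinite)
    (hY : ∀ i, Big A B (Y i) L) :
    ∃ n ∈ L, ∃ L', L' ⊆ L ∧ L'.Infinite ∧ (∀ j ∈ L', n < j) ∧
      ∀ i, Big A B (Y i ∩ A n) L' ∧ Big A B (Y i ∩ B n) L' := by
  classical
  by_contra hcon
  have Hc : ∀ n ∈ L, ∀ L', L' ⊆ L → L'.Infinite → (∀ j ∈ L', n < j) →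
      ∃ i c, ∃ L'', L'' ⊆ L' ∧ L''.Infinite ∧
        ∀ x ∈ Y i ∩ (bif c then A n else B n), ¬ Alt A B x L'' := by
    intro n hn L' h1 h2 h3
    by_contra h5
    push_neg at h5
    refine hcon ⟨n, hn, L', h1, h2, h3, fun i => ⟨?_, ?_⟩⟩
    · intro M hM hMi
      exact h5 i true M hM hMi
    · intro M hM hMi
      exact h5 i false M hM hMi
  -- fusion
  let St := {p : ℕ × Set ℕ // p.2 ⊆ L ∧ p.2.Infinite ∧ ∀ j ∈ p.2, p.1 < j}
  have step : ∀ p : St, ∃ q : St, q.1.2 ⊆ p.1.2 ∧ q.1.1 ∈ p.1.2 ∧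
      ∃ i c, ∀ x ∈ Y i ∩ (bif c then A q.1.1 else B q.1.1), ¬ Alt A B x q.1.2 := by
    rintro ⟨⟨n₀, L₀⟩, hsub₀, hinf₀, hgt₀⟩
    obtain ⟨n, hnL₀⟩ := hinf₀.nonempty
    have hL₁ : (L₀ \ Set.Iic n).Infinite := hinf₀.diff (Set.finite_Iic n)
    obtain ⟨i, c, L'', hs, hi, hnull⟩ := Hc n (hsub₀ hnL₀) (L₀ \ Set.Iic n)
      (Set.diff_subset.trans hsub₀) hL₁
      (fun j hj => lt_of_not_ge fun h => hj.2 h)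
    have hsubL'' : L'' ⊆ L₀ \ Set.Iic n := hs
    refine ⟨⟨(n, L''), (hsubL''.trans Set.diff_subset).trans hsub₀, hi,
      fun j hj => lt_of_not_ge fun h => (hsubL'' hj).2 h⟩,
      hsubL''.trans Set.diff_subset, hnL₀, i, c, hnull⟩
  choose next hnext1 hnext2 hnext3 using step
  have hp₀ : Nonempty St :=
    ⟨⟨(0, L \ Set.Iic 0), Set.diff_subset, hL.diff (Set.finite_Iic 0),
      fun j hj => lt_of_not_ge fun h => hj.2 h⟩⟩
  obtain ⟨p₀⟩ := hp₀
  let f : ℕ → St := fun k => Nat.rec (motive := fun _ => St) p₀ (fun _ p => next p) k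
  have hf : ∀ k, f (k + 1) = next (f k) := fun k => rfl
  set N : ℕ → ℕ := fun k => (f k).1.1 with hN
  set 𝕃 : ℕ → Set ℕ := fun k => (f k).1.2 with h𝕃
  have hLmono : ∀ k, 𝕃 (k + 1) ⊆ 𝕃 k := fun k => by
    have := hnext1 (f k); rw [← hf k] at this; exact this
  have hNmem : ∀ k, N (k + 1) ∈ 𝕃 k := fun k => by
    have := hnext2 (f k); rw [← hf k] at this; exact this
  have hLsub : ∀ k k', k ≤ k' → 𝕃 k' ⊆ 𝕃 k := by
    intro k k' hk
    induction k' with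
    | zero => cases Nat.le_zero.mp hk; exact subset_rfl
    | succ m ih =>
      rcases Nat.lt_or_ge k (m + 1) with h | h
      · exact (hLmono m).trans (ih (Nat.lt_succ_iff.mp h))
      · cases le_antisymm hk h; exact subset_rfl
  have hNlt : ∀ k, N k < N (k + 1) := fun k => (f k).2.2.2 _ (hNmem k)
  have hNsm : StrictMono N := strictMono_nat_of_lt_succ hNlt
  have hnull : ∀ k, ∃ i c, ∀ x ∈ Y i ∩ (bif c then A (N (k + 1)) else B (N (k + 1))),
      ¬ Alt A B x (𝕃 (k + 1)) := fun k => by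
    have := hnext3 (f k); rw [← hf k] at this; exact this
  choose I C hIC using hnull
  obtain ⟨⟨i, c⟩, hfib⟩ := Finite.exists_infinite_fiber (fun k => (I k, C k))
  have hK : ((fun k => (I k, C k)) ⁻¹' {(i, c)}).Infinite := Set.infinite_coe_iff.mp hfib
  set K : Set ℕ := (fun k => (I k, C k)) ⁻¹' {(i, c)} with hKdef
  set Ldag : Set ℕ := (fun k => N (k + 1)) '' K with hLdag
  have hinj : Function.Injective fun k => N (k + 1) := fun a b hab =>
    Nat.succ_injective (hNsm.injective hab)
  have hLdaginf : Ldag.Infinite := hK.image (hinj.injOn)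
  have hLdagsub : Ldag ⊆ L := by
    rintro - ⟨k, -, rfl⟩
    exact (f k).2.1 (hNmem k)
  obtain ⟨x, hxY, hxAlt⟩ := hY i Ldag hLdagsub hLdaginf
  have hside : {n | n ∈ Ldag ∧ x ∈ (bif c then A n else B n)}.Infinite := by
    cases c
    · exact hxAlt.2
    · exact hxAlt.1
  obtain ⟨j₀, hj₀L, hj₀x⟩ := hside.nonempty
  obtain ⟨k, hkK, rfl⟩ := hj₀L
  have hIk : I k = i ∧ C k = c := by
    have := hkK
    simp only [hKdef, Set.mem_preimage, Set.mem_singleton_iff, Prod.mk.injEq] at this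
    exact this
  -- x fails Alt on 𝕃 (k+1) by nullity
  have hnotAlt : ¬ Alt A B x (𝕃 (k + 1)) := by
    have := hIC k x
    rw [hIk.1, hIk.2] at this
    exact this ⟨hxY, hj₀x⟩
  -- but x does Alt on 𝕃 (k+1)
  apply hnotAlt
  have hFin : ((fun k => N (k + 1)) '' Set.Iic k).Finite :=
    (Set.finite_Iic k).image _
  have h1 : Alt A B x (Ldag \ ((fun k => N (k + 1)) '' Set.Iic k)) := hxAlt.diff hFin
  refine h1.mono ?_
  rintro - ⟨⟨j, hjK, rfl⟩, hnot⟩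
  have hjk : k + 1 ≤ j := by
    by_contra h
    exact hnot ⟨j, Set.mem_Iic.mpr (by omega), rfl⟩
  exact hLsub (k + 1) j hjk (hNmem j)

variable (A B) in
/-- the set realizing pattern `(P, Q)`. -/
def SInt (P Q : Finset ℕ) : Set X := (⋂ n ∈ P, A n) ∩ ⋂ n ∈ Q, B n

lemma thmC (L : Set ℕ) (hL : L.Infinite) (hH : Big A B Set.univ L) :
    ∃ φ : ℕ → ℕ, StrictMono φ ∧ ∀ P Q : Finset ℕ, Disjoint P Q →
      ((⋂ k ∈ P, A (φ k)) ∩ ⋂ k ∈ Q, B (φ k)).Nonempty := by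
  classical
  let St := {p : Finset ℕ × Set ℕ // p.2 ⊆ L ∧ p.2.Infinite ∧
    (∀ j ∈ p.2, ∀ e ∈ p.1, e < j) ∧
    ∀ P Q : Finset ℕ, Disjoint P Q → P ∪ Q ⊆ p.1 → Big A B (SInt A B P Q) p.2}
  have step : ∀ p : St, ∃ q : St, ∃ n, q.1.1 = insert n p.1.1 ∧
      (∀ e ∈ p.1.1, e < n) ∧ q.1.2 ⊆ p.1.2 := by
    rintro ⟨⟨E, LE⟩, hsubL, hinf, hgt, hbig⟩
    have hfin : Finite {pq : Finset ℕ × Finset ℕ // Disjoint pq.1 pq.2 ∧ pq.1 ∪ pq.2 ⊆ E} := by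
      have h1 : {pq : Finset ℕ × Finset ℕ | Disjoint pq.1 pq.2 ∧ pq.1 ∪ pq.2 ⊆ E}.Finite := by
        apply Set.Finite.subset ((E.powerset.finite_toSet).prod (E.powerset.finite_toSet))
        rintro ⟨P, Q⟩ ⟨-, h⟩
        constructor
        · simpa [Finset.mem_powerset] using (Finset.union_subset_iff.mp h).1
        · simpa [Finset.mem_powerset] using (Finset.union_subset_iff.mp h).2
      exact h1.to_subtype
    obtain ⟨n, hnLE, L', hL'sub, hL'inf, hL'gt, hsplit⟩ :=
      claim2 (ι := {pq : Finset ℕ × Finset ℕ // Disjoint pq.1 pq.2 ∧ pq.1 ∪ pq.2 ⊆ E})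
        (fun i => SInt A B i.1.1 i.1.2) LE hinf (fun i => hbig i.1.1 i.1.2 i.2.1 i.2.2)
    have hnE : ∀ e ∈ E, e < n := fun e he => hgt n hnLE e he
    have hnnotE : n ∉ E := fun h => lt_irrefl n (hnE n h)
    refine ⟨⟨(insert n E, L'), hL'sub.trans hsubL, hL'inf, ?_, ?_⟩, n, rfl, hnE, hL'sub⟩
    · intro j hj e he
      rcases Finset.mem_insert.mp he with rfl | he'
      · exact hL'gt j hj
      · exact hgt j (hL'sub hj) e he'
    · intro P Q hPQ hsub
      by_cases hnP : n ∈ P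
      · have hQn : n ∉ Q := fun h => (Finset.disjoint_left.mp hPQ hnP) h
        have hsub' : (P.erase n) ∪ Q ⊆ E := by
          intro x hx
          rcases Finset.mem_union.mp hx with hx' | hx'
          · have hx1 := Finset.mem_of_mem_erase hx'
            have hx2 := Finset.ne_of_mem_erase hx'
            rcases Finset.mem_insert.mp (hsub (Finset.mem_union_left _ hx1)) with h | h
            · exact absurd h hx2
            · exact h
          · rcases Finset.mem_insert.mp (hsub (Finset.mem_union_right _ hx')) with h | h
            · exact absurd h (fun hh => hQn (hh ▸ hx'))
            · exact h
        have hdisj' : Disjoint (P.erase n) Q :=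
          hPQ.mono_left (Finset.erase_subset n P)
        have hbig' := (hsplit ⟨(P.erase n, Q), hdisj', hsub'⟩).1
        have hEq : SInt A B P Q = SInt A B (P.erase n) Q ∩ A n := by
          simp only [SInt]
          ext y
          simp only [Set.mem_inter_iff, Set.mem_iInter, Finset.mem_erase]
          constructor
          · rintro ⟨h1, h2⟩
            exact ⟨⟨fun i hi => h1 i hi.2, h2⟩, h1 n hnP⟩
          · rintro ⟨⟨h1, h2⟩, h3⟩
            refine ⟨fun i hi => ?_, h2⟩
            by_cases hin : i = n
            · subst hin; exact h3
            · exact h1 i ⟨hin, hi⟩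
        rw [hEq]
        exact hbig'
      · by_cases hnQ : n ∈ Q
        · have hsub' : P ∪ (Q.erase n) ⊆ E := by
            intro x hx
            rcases Finset.mem_union.mp hx with hx' | hx'
            · rcases Finset.mem_insert.mp (hsub (Finset.mem_union_left _ hx')) with h | h
              · exact absurd h (fun hh => hnP (hh ▸ hx'))
              · exact h
            · have hx1 := Finset.mem_of_mem_erase hx'
              have hx2 := Finset.ne_of_mem_erase hx'
              rcases Finset.mem_insert.mp (hsub (Finset.mem_union_right _ hx1)) with h | h
              · exact absurd h hx2
              · exact h
          have hdisj' : Disjoint P (Q.erase n) :=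
            hPQ.mono_right (Finset.erase_subset n Q)
          have hbig' := (hsplit ⟨(P, Q.erase n), hdisj', hsub'⟩).2
          have hEq : SInt A B P Q = SInt A B P (Q.erase n) ∩ B n := by
            simp only [SInt]
            ext y
            simp only [Set.mem_inter_iff, Set.mem_iInter, Finset.mem_erase]
            constructor
            · rintro ⟨h1, h2⟩
              exact ⟨⟨h1, fun i hi => h2 i hi.2⟩, h2 n hnQ⟩
            · rintro ⟨⟨h1, h2⟩, h3⟩
              refine ⟨h1, fun i hi => ?_⟩
              by_cases hin : i = n
              · subst hin; exact h3
              · exact h2 i ⟨hin, hi⟩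
          rw [hEq]
          exact hbig'
        · have hsub' : P ∪ Q ⊆ E := by
            intro x hx
            rcases Finset.mem_insert.mp (hsub hx) with h | h
            · subst h
              rcases Finset.mem_union.mp hx with h' | h'
              · exact absurd h' hnP
              · exact absurd h' hnQ
            · exact h
          exact (hbig P Q hPQ hsub').mono hL'sub
  have hbase : Nonempty St := by
    refine ⟨⟨(∅, L), subset_rfl, hL, fun j _ e he => absurd he (Finset.notMem_empty e), ?_⟩⟩
    intro P Q hPQ hsub
    have hP : P = ∅ := Finset.subset_empty.mp (fun x hx => hsub (Finset.mem_union_left _ hx))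
    have hQ : Q = ∅ := Finset.subset_empty.mp (fun x hx => hsub (Finset.mem_union_right _ hx))
    subst hP; subst hQ
    have : SInt A B (∅ : Finset ℕ) (∅ : Finset ℕ) = Set.univ := by
      simp only [SInt]
      simp
    rw [this]
    exact hH
  obtain ⟨p₀⟩ := hbase
  choose next nn hnext1 hnext2 hnext3 using step
  let f : ℕ → St := fun k => Nat.rec (motive := fun _ => St) p₀ (fun _ p => next p) k
  have hf : ∀ k, f (k + 1) = next (f k) := fun k => rfl
  set φ : ℕ → ℕ := fun k => nn (f k) with hφ
  set E : ℕ → Finset ℕ := fun k => (f k).1.1 with hE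
  have hEins : ∀ k, E (k + 1) = insert (φ k) (E k) := fun k => by
    have := hnext1 (f k); rw [← hf k] at this; exact this
  have hφgt : ∀ k, ∀ e ∈ E k, e < φ k := fun k => by
    have := hnext2 (f k); exact this
  have hφmem : ∀ k, φ k ∈ E (k + 1) := fun k => by
    rw [hEins k]; exact Finset.mem_insert_self _ _
  have hφlt : ∀ k, φ k < φ (k + 1) := fun k => hφgt (k + 1) (φ k) (hφmem k)
  have hφsm : StrictMono φ := strictMono_nat_of_lt_succ hφlt
  have hEmono : ∀ k k', k ≤ k' → E k ⊆ E k' := by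
    intro k k' hk
    induction k' with
    | zero => cases Nat.le_zero.mp hk; exact subset_rfl
    | succ m ih =>
      rcases Nat.lt_or_ge k (m + 1) with h | h
      · refine (ih (Nat.lt_succ_iff.mp h)).trans ?_
        rw [hEins m]; exact Finset.subset_insert _ _
      · cases le_antisymm hk h; exact subset_rfl
  refine ⟨φ, hφsm, ?_⟩
  intro P Q hPQ
  set K : ℕ := (P ∪ Q).sup id + 1 with hK
  have hmem : ∀ k ∈ P ∪ Q, φ k ∈ E K := by
    intro k hk
    have : k + 1 ≤ K := by
      have := Finset.le_sup (f := id) hk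
      simp only [id] at this
      omega
    exact hEmono (k + 1) K this (hφmem k)
  have hdisj' : Disjoint (P.image φ) (Q.image φ) :=
    Finset.disjoint_image (hφsm.injective) |>.mpr hPQ
  have hsub' : (P.image φ) ∪ (Q.image φ) ⊆ E K := by
    intro x hx
    rcases Finset.mem_union.mp hx with hx' | hx'
    · obtain ⟨k, hk, rfl⟩ := Finset.mem_image.mp hx'
      exact hmem k (Finset.mem_union_left _ hk)
    · obtain ⟨k, hk, rfl⟩ := Finset.mem_image.mp hx'
      exact hmem k (Finset.mem_union_right _ hk)
  have hbigK := (f K).2.2.2.2 (P.image φ) (Q.image φ) hdisj' hsub'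
  have hne := hbigK.nonempty (f K).2.2.1
  have hEq : SInt A B (P.image φ) (Q.image φ) =
      (⋂ k ∈ P, A (φ k)) ∩ ⋂ k ∈ Q, B (φ k) := by
    simp only [SInt]
    rw [Finset.set_biInter_finset_image, Finset.set_biInter_finset_image]
  rwa [hEq] at hne

end RosenthalAux

open RosenthalAux

/-- A sequence `f` of real-valued functions on `X` is independent if there are
reals `s < r` such that for all disjoint finite sets `P, M ⊆ ℕ` the set
`⋂_{n∈P} f_n⁻¹(-∞,s) ∩ ⋂_{n∈M} f_n⁻¹(r,∞)` is nonempty. -/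
def IsIndependentSeq {X : Type*} (f : ℕ → X → ℝ) : Prop :=
  ∃ s r : ℝ, s < r ∧ ∀ P M : Finset ℕ, Disjoint P M →
    ((⋂ n ∈ P, f n ⁻¹' Set.Iio s) ∩ ⋂ n ∈ M, f n ⁻¹' Set.Ioi r).Nonempty

/-- Rosenthal's lemma: for a compact space `X` and a norm-bounded `F ⊆ C(X)`,
`F` contains no independent sequence iff every sequence in `F` has a pointwise
convergent subsequence. -/
theorem rosenthal_lemma {X : Type*} [TopologicalSpace X] [CompactSpace X]
    (F : Set C(X, ℝ)) (hbdd : ∃ r : ℝ, ∀ f ∈ F, ∀ x : X, |f x| ≤ r) :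
    (¬ ∃ f : ℕ → C(X, ℝ), (∀ n, f n ∈ F) ∧ IsIndependentSeq (fun n => ⇑(f n))) ↔
      (∀ f : ℕ → C(X, ℝ), (∀ n, f n ∈ F) →
        ∃ φ : ℕ → ℕ, StrictMono φ ∧ ∃ g : X → ℝ,
          ∀ x : X, Tendsto (fun k => f (φ k) x) atTop (𝓝 (g x))) := by
  obtain ⟨r₀, hr₀⟩ := hbdd
  constructor
  · -- hard direction
    intro hNoInd f hf
    classical
    have key : ∀ s t : ℝ, s < t → ∀ M : Set ℕ, M.Infinite →
        ∃ M', M' ⊆ M ∧ M'.Infinite ∧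
          ∀ x : X, ¬ Alt (fun n => (⇑(f n)) ⁻¹' Set.Iio s)
            (fun n => (⇑(f n)) ⁻¹' Set.Ioi t) x M' := by
      intro s t hst M hM
      by_contra hcon
      push_neg at hcon
      have hbig : Big (fun n => (⇑(f n)) ⁻¹' Set.Iio s)
          (fun n => (⇑(f n)) ⁻¹' Set.Ioi t) Set.univ M := by
        intro L' hL' hL'i
        obtain ⟨x, hx⟩ := hcon L' hL' hL'i
        exact ⟨x, Set.mem_univ x, hx⟩
      obtain ⟨φ, hφ, hpat⟩ := thmC M hM hbig
      exact hNoInd ⟨fun k => f (φ k), fun k => hf _, s, t, hst, hpat⟩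
    obtain ⟨e, he⟩ := exists_surjective_nat (ℚ × ℚ)
    let St := {M : Set ℕ // M.Infinite}
    have step : ∀ j : ℕ, ∀ p : St, ∃ q : St, q.1 ⊆ p.1 ∧
        (((e j).1 : ℝ) < ((e j).2 : ℝ) →
          ∀ x : X, ¬ Alt (fun n => ⇑(f n) ⁻¹' Set.Iio ((e j).1 : ℝ))
            (fun n => ⇑(f n) ⁻¹' Set.Ioi ((e j).2 : ℝ)) x q.1) := by
      rintro j ⟨M, hM⟩
      by_cases h : ((e j).1 : ℝ) < ((e j).2 : ℝ)
      · obtain ⟨M', h1, h2, h3⟩ := key _ _ h M hM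
        exact ⟨⟨M', h2⟩, h1, fun _ => h3⟩
      · exact ⟨⟨M, hM⟩, subset_rfl, fun h' => absurd h' h⟩
    choose nextM h1M h2M using step
    let Ms : ℕ → St := fun j => Nat.rec (motive := fun _ => St)
      (nextM 0 ⟨Set.univ, Set.infinite_univ⟩) (fun j p => nextM (j + 1) p) j
    have hMs : ∀ j, Ms (j + 1) = nextM (j + 1) (Ms j) := fun j => rfl
    have hMsmono : ∀ j, (Ms (j + 1)).1 ⊆ (Ms j).1 := fun j => h1M (j + 1) (Ms j)
    have hMssub : ∀ j j', j ≤ j' → (Ms j').1 ⊆ (Ms j).1 := by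
      intro j j' hj
      induction j' with
      | zero => cases Nat.le_zero.mp hj; exact subset_rfl
      | succ m ih =>
        rcases Nat.lt_or_ge j (m + 1) with h | h
        · exact (hMsmono m).trans (ih (Nat.lt_succ_iff.mp h))
        · cases le_antisymm hj h; exact subset_rfl
    have hsmall : ∀ j, ((e j).1 : ℝ) < ((e j).2 : ℝ) →
        ∀ x : X, ¬ Alt (fun n => ⇑(f n) ⁻¹' Set.Iio ((e j).1 : ℝ))
          (fun n => ⇑(f n) ⁻¹' Set.Ioi ((e j).2 : ℝ)) x (Ms j).1 := by
      intro j
      cases j with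
      | zero => exact h2M 0 _
      | succ m => exact h2M (m + 1) (Ms m)
    have hgtex : ∀ j (b : ℕ), ∃ v, v ∈ (Ms j).1 ∧ b < v := by
      intro j b
      obtain ⟨v, hv1, hv2⟩ := (Ms j).2.exists_gt b
      exact ⟨v, hv1, hv2⟩
    let ψ : ℕ → ℕ := fun j => Nat.rec (motive := fun _ => ℕ)
      ((hgtex 0 0).choose) (fun j v => (hgtex (j + 1) v).choose) j
    have hψmem : ∀ j, ψ j ∈ (Ms j).1 := by
      intro j
      cases j with
      | zero => exact (hgtex 0 0).choose_spec.1
      | succ m => exact (hgtex (m + 1) (ψ m)).choose_spec.1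
    have hψlt : ∀ j, ψ j < ψ (j + 1) := fun j => (hgtex (j + 1) (ψ j)).choose_spec.2
    have hψsm : StrictMono ψ := strictMono_nat_of_lt_succ hψlt
    refine ⟨ψ, hψsm, fun x => limsup (fun k => f (ψ k) x) atTop, ?_⟩
    intro x
    set a : ℕ → ℝ := fun k => f (ψ k) x with ha
    have hb1 : IsBoundedUnder (· ≤ ·) atTop a :=
      isBoundedUnder_of ⟨r₀, fun k => (abs_le.mp (hr₀ _ (hf _) x)).2⟩
    have hb2 : IsBoundedUnder (· ≥ ·) atTop a :=
      isBoundedUnder_of ⟨-r₀, fun k => (abs_le.mp (hr₀ _ (hf _) x)).1⟩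
    have heq : liminf a atTop = limsup a atTop := by
      by_contra hne
      have hlt : liminf a atTop < limsup a atTop :=
        lt_of_le_of_ne (liminf_le_limsup hb1 hb2) hne
      obtain ⟨q1, hq1, hq1'⟩ := exists_rat_btwn hlt
      obtain ⟨q2, hq2, hq2'⟩ := exists_rat_btwn hq1'
      obtain ⟨j, hj⟩ := he (q1, q2)
      have hfreq1 : ∃ᶠ k in atTop, a k < (q1 : ℝ) :=
        frequently_lt_of_liminf_lt (hb1.isCoboundedUnder_ge) hq1
      have hfreq2 : ∃ᶠ k in atTop, (q2 : ℝ) < a k :=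
        frequently_lt_of_lt_limsup (hb2.isCoboundedUnder_le) hq2'
      have hinf1 : {k | a k < (q1 : ℝ)}.Infinite :=
        Nat.frequently_atTop_iff_infinite.mp hfreq1
      have hinf2 : {k | (q2 : ℝ) < a k}.Infinite :=
        Nat.frequently_atTop_iff_infinite.mp hfreq2
      have halt : Alt (fun n => ⇑(f n) ⁻¹' Set.Iio ((q1 : ℝ)))
          (fun n => ⇑(f n) ⁻¹' Set.Ioi ((q2 : ℝ))) x (Ms j).1 := by
        constructor
        · have h1 : ({k | a k < (q1 : ℝ)} \ Set.Iio j).Infinite :=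
            hinf1.diff (Set.finite_Iio j)
          refine (h1.image (hψsm.injective.injOn)).mono ?_
          rintro - ⟨k, ⟨hk1, hk2⟩, rfl⟩
          refine ⟨hMssub j k (by simpa using hk2) (hψmem k), hk1⟩
        · have h1 : ({k | (q2 : ℝ) < a k} \ Set.Iio j).Infinite :=
            hinf2.diff (Set.finite_Iio j)
          refine (h1.image (hψsm.injective.injOn)).mono ?_
          rintro - ⟨k, ⟨hk1, hk2⟩, rfl⟩
          refine ⟨hMssub j k (by simpa using hk2) (hψmem k), hk1⟩
      have hq12 : ((e j).1 : ℝ) < ((e j).2 : ℝ) := by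
        rw [hj]
        exact hq2
      have := hsmall j hq12 x
      rw [hj] at this
      exact this halt
    exact tendsto_of_liminf_eq_limsup heq rfl hb1 hb2
  · -- easy direction
    rintro hconv ⟨f, hfF, s, t, hst, hpat⟩
    obtain ⟨φ, hφ, g, hg⟩ := hconv f hfF
    classical
    set C : ℕ → Set X := fun k =>
      if Even k then ⇑(f (φ k)) ⁻¹' Set.Iic s else ⇑(f (φ k)) ⁻¹' Set.Ici t with hC
    have hCcl : ∀ k, IsClosed (C k) := by
      intro k
      simp only [hC]
      split
      · exact isClosed_Iic.preimage (f (φ k)).continuous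
      · exact isClosed_Ici.preimage (f (φ k)).continuous
    set Z : ℕ → Set X := fun K => ⋂ k ∈ Finset.range (K + 1), C k with hZ
    have hZd : ∀ K, Z (K + 1) ⊆ Z K := by
      intro K y hy
      simp only [hZ, Set.mem_iInter] at hy ⊢
      intro k hk
      exact hy k (Finset.mem_range.mpr (Nat.lt_succ_of_lt (Finset.mem_range.mp hk)))
    have hZcl : ∀ K, IsClosed (Z K) := fun K => isClosed_biInter fun k _ => hCcl k
    have hZne : ∀ K, (Z K).Nonempty := by
      intro K
      set P : Finset ℕ := ((Finset.range (K + 1)).filter (fun k => Even k)).image φ with hP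
      set Q : Finset ℕ := ((Finset.range (K + 1)).filter (fun k => ¬ Even k)).image φ with hQ
      have hdisj : Disjoint P Q := by
        rw [hP, hQ]
        refine (Finset.disjoint_image hφ.injective).mpr ?_
        exact Finset.disjoint_filter_filter_not _ _ _
      obtain ⟨y, hy1, hy2⟩ := hpat P Q hdisj
      simp only [Set.mem_iInter, Set.mem_preimage] at hy1 hy2
      refine ⟨y, ?_⟩
      simp only [hZ, Set.mem_iInter]
      intro k hk
      by_cases hek : Even k
      · have hmem : φ k ∈ P := Finset.mem_image_of_mem φ (Finset.mem_filter.mpr ⟨hk, hek⟩)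
        have := hy1 (φ k) hmem
        simp only [hC, if_pos hek]
        exact Set.mem_preimage.mpr (Set.mem_Iic.mpr (le_of_lt (Set.mem_Iio.mp this)))
      · have hmem : φ k ∈ Q := Finset.mem_image_of_mem φ (Finset.mem_filter.mpr ⟨hk, hek⟩)
        have := hy2 (φ k) hmem
        simp only [hC, if_neg hek]
        exact Set.mem_preimage.mpr (Set.mem_Ici.mpr (le_of_lt (Set.mem_Ioi.mp this)))
    obtain ⟨x, hx⟩ := IsCompact.nonempty_iInter_of_sequence_nonempty_isCompact_isClosed
      Z hZd hZne ((hZcl 0).isCompact) hZcl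
    have hxC : ∀ k, x ∈ C k := by
      intro k
      have hxk : x ∈ Z k := Set.mem_iInter.mp hx k
      simp only [hZ, Set.mem_iInter] at hxk
      exact hxk k (Finset.mem_range.mpr (Nat.lt_succ_self k))
    have heven : ∀ m : ℕ, f (φ (2 * m)) x ≤ s := by
      intro m
      have := hxC (2 * m)
      simp only [hC, if_pos (even_two_mul m)] at this
      exact this
    have hodd : ∀ m : ℕ, t ≤ f (φ (2 * m + 1)) x := by
      intro m
      have := hxC (2 * m + 1)
      have hodd' : ¬ Even (2 * m + 1) := by simp [Nat.even_add_one, Nat.even_mul]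
      simp only [hC, if_neg hodd'] at this
      exact this
    have hm1 : StrictMono (fun m : ℕ => 2 * m) := by
      intro a b hab; simp only []; omega
    have hm2 : StrictMono (fun m : ℕ => 2 * m + 1) := by
      intro a b hab; simp only []; omega
    have hlim1 : Tendsto (fun m => f (φ (2 * m)) x) atTop (𝓝 (g x)) :=
      (hg x).comp hm1.tendsto_atTop
    have hlim2 : Tendsto (fun m => f (φ (2 * m + 1)) x) atTop (𝓝 (g x)) :=
      (hg x).comp hm2.tendsto_atTop
    have h1 : g x ≤ s := le_of_tendsto hlim1 (Filter.Eventually.of_forall heven)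
    have h2 : t ≤ g x := ge_of_tendsto hlim2 (Filter.Eventually.of_forall hodd)
    linarith
end

section
/- Let X be a compact topological space and let A be a norm-bounded subset of C(X) whose closure in the product space ℝ^X (topology of pointwise convergence) is compact and contained in C(X). Then every sequence in A has a subsequence that converges pointwise to a function in C(X). -/
open Filter Topology

/-- If `X` is compact and `A ⊆ C(X)` is norm-bounded with pointwise closure (in
`ℝ^X`) compact and contained in `C(X)`, then every sequence in `A` has a
subsequence converging pointwise to a continuous function. -/
theorem precompact_implies_seq_precompact {X : Type*} [TopologicalSpace X] [CompactSpace X]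
    (A : Set C(X, ℝ)) (hbdd : ∃ r : ℝ, ∀ f ∈ A, ∀ x : X, |f x| ≤ r)
    (hcomp : IsCompact (closure ((fun f : C(X, ℝ) => (f : X → ℝ)) '' A)))
    (hcont : ∀ g ∈ closure ((fun f : C(X, ℝ) => (f : X → ℝ)) '' A), Continuous g) :
    ∀ f : ℕ → C(X, ℝ), (∀ n, f n ∈ A) →
      ∃ φ : ℕ → ℕ, StrictMono φ ∧ ∃ g : C(X, ℝ),
        ∀ x : X, Tendsto (fun k => f (φ k) x) atTop (𝓝 (g x)) := by
  intro f hf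
  rcases isEmpty_or_nonempty X with hX | hX
  · exact ⟨id, strictMono_id, f 0, fun x => isEmptyElim x⟩
  -- the "diagonal" map into `ℝ^ℕ`
  set Φ : X → ℕ → ℝ := fun x n => f n x with hΦdef
  have hΦcont : Continuous Φ := continuous_pi fun n => (f n).continuous
  have hsub : Set.range (fun n => ⇑(f n)) ⊆ (fun f : C(X, ℝ) => (f : X → ℝ)) '' A := by
    rintro _ ⟨n, rfl⟩; exact ⟨f n, hf n, rfl⟩
  set B : Set (X → ℝ) := closure (Set.range fun n => ⇑(f n)) with hBdef
  have hBsub : B ⊆ closure ((fun f : C(X, ℝ) => (f : X → ℝ)) '' A) := closure_mono hsub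
  have hBcomp : IsCompact B := hcomp.of_isClosed_subset isClosed_closure hBsub
  have hBcont : ∀ g ∈ B, Continuous g := fun g hg => hcont g (hBsub hg)
  -- every element of `B` is constant on fibers of `Φ`
  have hfib : ∀ g ∈ B, ∀ x y : X, Φ x = Φ y → g x = g y := by
    intro g hg x y hxy
    have hcl : IsClosed {h : X → ℝ | h x = h y} :=
      isClosed_eq (continuous_apply x) (continuous_apply y)
    have hB : B ⊆ {h : X → ℝ | h x = h y} := by
      apply closure_minimal _ hcl
      rintro _ ⟨n, rfl⟩
      exact congrFun hxy n
    exact hB hg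
  -- a countable dense subset of the range of `Φ`
  haveI : Nonempty (Set.range Φ) := ⟨⟨Φ hX.some, Set.mem_range_self _⟩⟩
  obtain ⟨u, hu⟩ : ∃ u : ℕ → Set.range Φ, DenseRange u :=
    ⟨TopologicalSpace.denseSeq _, TopologicalSpace.denseRange_denseSeq _⟩
  choose s hs using fun k => (u k).2
  -- restriction to the countable set
  set R : (X → ℝ) → ℕ → ℝ := fun h k => h (s k) with hRdef
  have hRcont : Continuous R := continuous_pi fun k => continuous_apply (s k)
  have hRinj : Set.InjOn R B := by
    intro g₁ hg₁ g₂ hg₂ hR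
    funext x
    have hx : (⟨Φ x, Set.mem_range_self x⟩ : Set.range Φ) ∈ closure (Set.range u) := hu _
    rw [mem_closure_iff_seq_limit] at hx
    obtain ⟨v, hvmem, hvlim⟩ := hx
    choose j hj using hvmem
    set t : ℕ → X := fun k => s (j k) with htdef
    have hΦt : Tendsto (fun k => Φ (t k)) atTop (𝓝 (Φ x)) := by
      have h1 : Tendsto (fun k => ((v k : Set.range Φ) : ℕ → ℝ)) atTop (𝓝 (Φ x)) :=
        (continuous_subtype_val.tendsto _).comp hvlim
      convert h1 using 2 with k
      rw [htdef]
      simp only [hs (j k), hj k]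
    have hmapne : NeBot (map t atTop) := map_neBot
    set U : Ultrafilter X := Ultrafilter.of (map t atTop) with hUdef
    have hUle : (U : Filter X) ≤ map t atTop := Ultrafilter.of_le _
    obtain ⟨x', -, hx'⟩ := isCompact_univ.ultrafilter_le_nhds U
      (by simp)
    have hΦU1 : Tendsto Φ (U : Filter X) (𝓝 (Φ x')) := (hΦcont.tendsto x').mono_left hx'
    have hΦU2 : Tendsto Φ (U : Filter X) (𝓝 (Φ x)) := by
      refine le_trans (map_mono hUle) ?_
      rw [map_map]
      exact hΦt
    have hΦeq : Φ x' = Φ x := tendsto_nhds_unique hΦU1 hΦU2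
    have hEq : g₁ =ᶠ[(U : Filter X)] g₂ := by
      have hmem : Set.range t ∈ (U : Filter X) := hUle range_mem_map
      filter_upwards [hmem]
      rintro _ ⟨k, rfl⟩
      exact congrFun hR (j k)
    have h1 : Tendsto g₁ (U : Filter X) (𝓝 (g₁ x')) :=
      ((hBcont g₁ hg₁).tendsto x').mono_left hx'
    have h2 : Tendsto g₂ (U : Filter X) (𝓝 (g₂ x')) :=
      ((hBcont g₂ hg₂).tendsto x').mono_left hx'
    have hkey : g₁ x' = g₂ x' := tendsto_nhds_unique_of_eventuallyEq h1 h2 hEq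
    calc g₁ x = g₁ x' := hfib g₁ hg₁ x x' hΦeq.symm
      _ = g₂ x' := hkey
      _ = g₂ x := hfib g₂ hg₂ x' x hΦeq
  -- `B` is compact and injects continuously into `ℝ^ℕ`, hence metrizable
  haveI : CompactSpace B := isCompact_iff_compactSpace.1 hBcomp
  have he : Topology.IsClosedEmbedding (fun g : B => R (g : X → ℝ)) := by
    refine (hRcont.comp continuous_subtype_val).isClosedEmbedding ?_
    intro a b hab
    exact Subtype.ext (hRinj a.2 b.2 hab)
  haveI : TopologicalSpace.MetrizableSpace B := he.toIsEmbedding.metrizableSpace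
  -- extract a convergent subsequence
  set gn : ℕ → B := fun n => ⟨⇑(f n), subset_closure (Set.mem_range_self n)⟩ with hgn
  obtain ⟨a, -, φ, hφ, hlim⟩ := isCompact_univ.tendsto_subseq (x := gn) (fun n => Set.mem_univ _)
  refine ⟨φ, hφ, ⟨a.1, hBcont a.1 a.2⟩, fun x => ?_⟩
  have : Tendsto (fun k => ((gn (φ k) : X → ℝ)) x) atTop (𝓝 (a.1 x)) :=
    (((continuous_apply x).comp continuous_subtype_val).tendsto a).comp hlim
  exact this
end

section
/- Let X be a compact topological space and let A ⊆ C(X) be norm-bounded and countably precompact for the topology of pointwise convergence (every sequence in A has a pointwise cluster point in C(X)). Then every function in the closure of A for the topology of pointwise convergence is the uniform limit (i.e., limit in the supremum norm) of a sequence of elements of conv(A), the convex hull of A. -/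
/-!
Let `g` lie in the pointwise closure of `A`. A diagonal construction, alternating between
approximating `g` by an element `fₙ ∈ A` on a finite set and adding a finite net of `X` for the
pseudometric defined by `g, f₀, …, fₙ`, yields `fₙ → g` on a countable set `D` along which `g` and
every `fᵢ` can be approached sequentially. A pointwise cluster point `h ∈ C(X)` of a subsequence
agrees with `g` on `D`; for any `x`, a cluster point `z` of the approximating points of `D` has
`fᵢ z = fᵢ x` and `h z = g x`, so `g x` is a cluster value of every subsequence of `fₙ x`. Hence
`fₙ → g` pointwise and `g = h` is continuous.

A bounded sequence `uₙ → 0` pointwise then has `0` in the norm closure of its convex hull by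
Simons' inequality for the boundary `{±δₓ}` of `C(X)`. That inequality comes from a greedy
construction: choose `vₖ` in the closed convex hull `Wₖ` of the tail `uₖ₊₁, uₖ₊₂, …` nearly
minimizing `‖sₖ + ·‖`, where `sₖ₊₁ = 2 sₖ + vₖ`; for the dyadic means `yₖ = ∑ⱼ 2^-(j+1) vⱼ₊ₖ` and a
functional `φ` norming `y₀`, near-minimality against the competitor `yₖ ∈ Wₖ` keeps `φ yₖ` close to
`‖y₀‖`, while `φ yₖ ≤ c` eventually.
-/

open Filter Topology Set Bornology Pointwise

section Simons

variable {E : Type*} [NormedAddCommGroup E] [NormedSpace ℝ E]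

theorem Convex.tsum_smul_mem {C : Set E} (hC : Convex ℝ C) (hCc : IsClosed C) {w : ℕ → ℝ}
    (hw₀ : ∀ j, 0 ≤ w j) (hw : HasSum w 1) {x : ℕ → E} (hx : ∀ j, x j ∈ C)
    (hwx : Summable fun j => w j • x j) : ∑' j, w j • x j ∈ C := by
  have hlim : Tendsto (fun m => (Finset.range m).centerMass w x) atTop (𝓝 (∑' j, w j • x j)) := by
    simpa [Finset.centerMass] using
      (hw.tendsto_sum_nat.inv₀ one_ne_zero).smul hwx.hasSum.tendsto_sum_nat
  refine hCc.mem_of_tendsto hlim ?_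
  filter_upwards [hw.tendsto_sum_nat.eventually_const_lt one_pos] with m hm
  exact hC.centerMass_mem (fun j _ => hw₀ j) hm fun j _ => hx j

theorem hasSum_inv_two_pow_succ : HasSum (fun j : ℕ => (2 : ℝ)⁻¹ ^ (j + 1)) 1 := by
  simpa [pow_succ, div_eq_mul_inv, mul_comm] using hasSum_geometric_two' 1

theorem exists_greedy_seq (W : ℕ → Set E) (hW : ∀ k, (W k).Nonempty) {η : ℕ → ℝ}
    (hη : ∀ k, 0 < η k) :
    ∃ v s : ℕ → E, s 0 = 0 ∧ (∀ k, s (k + 1) = (2 : ℝ) • s k + v k) ∧ (∀ k, v k ∈ W k) ∧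
      ∀ k, ∀ w ∈ W k, ‖s k + v k‖ ≤ ‖s k + w‖ + η k := by
  have hmin : ∀ k z, ∃ v ∈ W k, ∀ w ∈ W k, ‖z + v‖ ≤ ‖z + w‖ + η k := by
    intro k z
    have : Nonempty (W k) := (hW k).to_subtype
    obtain ⟨⟨v, hv⟩, hlt⟩ := exists_lt_of_ciInf_lt
      (lt_add_of_pos_right (⨅ w : W k, ‖z + w‖) (hη k))
    have hbdd : BddBelow (range fun w : W k => ‖z + w‖) := ⟨0, by rintro _ ⟨_, rfl⟩; positivity⟩
    exact ⟨v, hv, fun w hw => hlt.le.trans (add_le_add_left (ciInf_le hbdd ⟨w, hw⟩) _)⟩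
  choose next hnextW hnext using hmin
  let s : ℕ → E := fun n => Nat.rec 0 (fun k z => (2 : ℝ) • z + next k z) n
  exact ⟨fun k => next k (s k), s, rfl, fun _ => rfl, fun k => hnextW k _, fun k => hnext k _⟩

theorem isBounded_closedConvexHull {s : Set E} (hs : IsBounded s) :
    IsBounded (closedConvexHull ℝ s) := by
  rw [closedConvexHull_eq_closure_convexHull]
  exact (isBounded_convexHull.2 hs).closure

variable [CompleteSpace E]

theorem summable_inv_two_pow_succ_smul {v : ℕ → E} (hv : IsBounded (range v)) :
    Summable fun j => (2 : ℝ)⁻¹ ^ (j + 1) • v j := by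
  obtain ⟨M, hM⟩ := isBounded_iff_forall_norm_le.1 hv
  refine hasSum_inv_two_pow_succ.summable.mul_right M |>.of_norm_bounded fun j => ?_
  rw [norm_smul, Real.norm_of_nonneg (by positivity)]
  exact mul_le_mul_of_nonneg_left (hM _ (mem_range_self j)) (by positivity)

noncomputable def dyadicMean (v : ℕ → E) : E := ∑' j, (2 : ℝ)⁻¹ ^ (j + 1) • v j

theorem dyadicMean_mem {C : Set E} (hC : Convex ℝ C) (hCc : IsClosed C) {v : ℕ → E}
    (hv : IsBounded (range v)) (hvC : ∀ j, v j ∈ C) : dyadicMean v ∈ C :=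
  hC.tsum_smul_mem hCc (fun _ => by positivity) hasSum_inv_two_pow_succ hvC
    (summable_inv_two_pow_succ_smul hv)

theorem two_smul_dyadicMean {v : ℕ → E} (hv : IsBounded (range v)) :
    (2 : ℝ) • dyadicMean v = v 0 + dyadicMean (fun j => v (j + 1)) := by
  rw [dyadicMean, (summable_inv_two_pow_succ_smul hv).tsum_eq_zero_add, smul_add,
    ← tsum_const_smul'' (2 : ℝ), dyadicMean]
  congr 1
  · simp
  · congr 1 with j
    rw [smul_smul]
    ring_nf

theorem exists_seq_mem_norm_sub_le_apply {W : ℕ → Set E} (hW : ∀ k, (W k).Nonempty)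
    (hW_anti : Antitone W) (hW_convex : ∀ k, Convex ℝ (W k)) (hW_closed : ∀ k, IsClosed (W k))
    (hW_bdd : IsBounded (W 0)) {ε : ℝ} (hε : 0 < ε) :
    ∃ y : ℕ → E, (∀ k, y k ∈ W k) ∧ ∀ φ : StrongDual ℝ E, ‖φ‖ ≤ 1 → φ (y 0) = ‖y 0‖ →
      ∀ k, ‖y 0‖ - ε ≤ φ (y k) := by
  obtain ⟨v, s, hs₀, hs, hvW, hv⟩ := exists_greedy_seq W hW
    (η := fun k => ε * 2⁻¹ ^ (k + 1)) (fun k => by positivity)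
  have hy_bdd : ∀ k, IsBounded (range fun j => v (j + k)) := fun k =>
    hW_bdd.subset <| range_subset_iff.2 fun j => hW_anti (Nat.zero_le _) (hvW (j + k))
  set y : ℕ → E := fun k => dyadicMean fun j => v (j + k)
  have hyW : ∀ k, y k ∈ W k := fun k => dyadicMean_mem (hW_convex k) (hW_closed k) (hy_bdd k)
    fun j => hW_anti (Nat.le_add_left k j) (hvW (j + k))
  have hy_succ : ∀ k, (2 : ℝ) • y k = v k + y (k + 1) := fun k => by
    simp only [y, two_smul_dyadicMean (hy_bdd k), zero_add, add_right_comm _ 1 k, add_assoc]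
  have hsy : ∀ k, s k + y k = (2 : ℝ) ^ k • y 0 := by
    intro k
    induction k with
    | zero => simp [hs₀]
    | succ k ih => rw [hs, add_assoc, ← hy_succ, ← smul_add, ih, smul_smul, pow_succ']
  refine ⟨y, hyW, fun φ hφ₁ hφ k => ?_⟩
  have hφ_le : ∀ x, φ x ≤ ‖x‖ := fun x => (le_abs_self _).trans <|
    (φ.le_opNorm x).trans <| mul_le_of_le_one_left (norm_nonneg x) hφ₁
  -- `y k` competes with `v k` in the greedy choice, and `φ` norms `s k + y k = 2 ^ k • y 0`.
  have hv_le : ∀ k, φ (v k) ≤ φ (y k) + ε * 2⁻¹ ^ (k + 1) := by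
    intro k
    have hnorm : ‖s k + y k‖ = φ (s k) + φ (y k) := by
      rw [← map_add, hsy, norm_smul, map_smul, hφ, smul_eq_mul,
        Real.norm_of_nonneg (by positivity)]
    have := (hφ_le (s k + v k)).trans (hv k (y k) (hyW k))
    rw [hnorm, map_add] at this
    linarith
  have hy_lower : ∀ k, ‖y 0‖ - ε * (1 - 2⁻¹ ^ k) ≤ φ (y k) := by
    intro k
    induction k with
    | zero => simp [hφ]
    | succ k ih =>
      have h2 : (2 : ℝ) * φ (y k) = φ (v k) + φ (y (k + 1)) := by
        rw [← smul_eq_mul, ← map_smul, hy_succ, map_add]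
      have := hv_le k
      rw [pow_succ] at this ⊢
      linarith
  have := hy_lower k
  have : 0 ≤ ε * 2⁻¹ ^ k := by positivity
  linarith

theorem simons_inequality {B : Set (StrongDual ℝ E)} (hB : ∀ φ ∈ B, ‖φ‖ ≤ 1)
    (hB_norming : ∀ x, ∃ φ ∈ B, φ x = ‖x‖) {u : ℕ → E} (hu : IsBounded (range u)) {c : ℝ}
    (hc : ∀ φ ∈ B, ∀ᶠ n in atTop, φ (u n) ≤ c) {ε : ℝ} (hε : 0 < ε) :
    ∃ x ∈ closedConvexHull ℝ (range u), ‖x‖ ≤ c + ε := by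
  set W : ℕ → Set E := fun k => closedConvexHull ℝ (u '' Ici (k + 1))
  have hW_range : W 0 ⊆ closedConvexHull ℝ (range u) :=
    (closedConvexHull ℝ).monotone (image_subset_range _ _)
  obtain ⟨y, hyW, hy⟩ := exists_seq_mem_norm_sub_le_apply (W := W)
    (fun k => ⟨u (k + 1), subset_closedConvexHull ⟨k + 1, mem_Ici.2 le_rfl, rfl⟩⟩)
    (fun _ _ hkl => (closedConvexHull ℝ).monotone (image_mono (Ici_subset_Ici.2 (by omega))))
    (fun _ => convex_closedConvexHull) (fun _ => isClosed_closedConvexHull)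
    ((isBounded_closedConvexHull hu).subset hW_range) hε
  obtain ⟨φ, hφB, hφ⟩ := hB_norming (y 0)
  obtain ⟨N, hN⟩ := (hc φ hφB).exists_forall_of_atTop
  have hyN : φ (y N) ≤ c := closedConvexHull_min (t := {x | φ x ≤ c})
    (by rintro _ ⟨n, hn, rfl⟩; exact hN n (by simp at hn; omega))
    (convex_halfSpace_le φ.isLinear c) (isClosed_le φ.continuous continuous_const) (hyW N)
  exact ⟨y 0, hW_range (hyW 0), by linarith [hy φ (hB φ hφB) hφ N]⟩

end Simons

theorem closedConvexHull_vadd {E : Type*} [NormedAddCommGroup E] [NormedSpace ℝ E] (a : E)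
    (s : Set E) : closedConvexHull ℝ (a +ᵥ s) = a +ᵥ closedConvexHull ℝ s := by
  simp only [closedConvexHull_eq_closure_convexHull, convexHull_vadd, closure_vadd]

namespace ContinuousMap

variable {X : Type*} [TopologicalSpace X] [CompactSpace X]

theorem exists_norm_eq_norm_apply [Nonempty X] (f : C(X, ℝ)) : ∃ x, ‖f‖ = ‖f x‖ := by
  obtain ⟨x, -, hx⟩ := isCompact_univ.exists_isMaxOn univ_nonempty
    (continuous_norm.comp f.continuous).continuousOn
  exact ⟨x, le_antisymm ((f.norm_le (norm_nonneg _)).2 fun y => hx (mem_univ y))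
    (f.norm_coe_le_norm x)⟩

theorem norm_evalCLM_le (x : X) : ‖(evalCLM ℝ x : C(X, ℝ) →L[ℝ] ℝ)‖ ≤ 1 :=
  ContinuousLinearMap.opNorm_le_bound _ zero_le_one fun f => by
    simpa using f.norm_coe_le_norm x

theorem zero_mem_closedConvexHull_of_tendsto_zero {u : ℕ → C(X, ℝ)} (hu : IsBounded (range u))
    (hu₀ : ∀ x, Tendsto (fun n => u n x) atTop (𝓝 0)) :
    (0 : C(X, ℝ)) ∈ closedConvexHull ℝ (range u) := by
  rcases isEmpty_or_nonempty X with hX | hX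
  · rw [Subsingleton.elim 0 (u 0)]
    exact subset_closedConvexHull (mem_range_self 0)
  rw [← isClosed_closedConvexHull.closure_eq, Metric.mem_closure_iff]
  intro ε hε
  set B : Set (StrongDual ℝ C(X, ℝ)) := {φ | ∃ x, φ = evalCLM ℝ x ∨ φ = -evalCLM ℝ x}
  have hB : ∀ φ ∈ B, ‖φ‖ ≤ 1 := by
    rintro φ ⟨x, rfl | rfl⟩
    · exact norm_evalCLM_le x
    · exact (ContinuousLinearMap.opNorm_neg _).trans_le (norm_evalCLM_le x)
  have hB_norming : ∀ f, ∃ φ ∈ B, φ f = ‖f‖ := by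
    intro f
    obtain ⟨x, hx⟩ := f.exists_norm_eq_norm_apply
    rcases le_or_gt 0 (f x) with hfx | hfx
    · exact ⟨_, ⟨x, .inl rfl⟩, by simp [hx, Real.norm_of_nonneg hfx]⟩
    · exact ⟨_, ⟨x, .inr rfl⟩, by simp [hx, Real.norm_eq_abs, abs_of_neg hfx]⟩
  have hc : ∀ φ ∈ B, ∀ᶠ n in atTop, φ (u n) ≤ ε / 2 := by
    rintro φ ⟨x, rfl | rfl⟩
    · filter_upwards [(hu₀ x).eventually_lt_const (half_pos hε)] with n hn
      exact hn.le
    · filter_upwards [(hu₀ x).neg.eventually_lt_const (u := ε / 2) (by simp [hε])] with n hn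
      simpa using hn.le
  obtain ⟨f, hf, hf_le⟩ := simons_inequality hB hB_norming hu hc (half_pos (half_pos hε))
  exact ⟨f, hf, by rw [dist_zero_left]; linarith⟩

theorem mem_closedConvexHull_of_tendsto {f : ℕ → C(X, ℝ)} (hf : IsBounded (range f))
    {g : C(X, ℝ)} (hfg : ∀ x, Tendsto (fun n => f n x) atTop (𝓝 (g x))) :
    g ∈ closedConvexHull ℝ (range f) := by
  have hrange : range (fun n => -g +ᵥ f n) = -g +ᵥ range f := by
    rw [← image_vadd, ← range_comp]; rfl
  have h₀ := zero_mem_closedConvexHull_of_tendsto_zero (u := fun n => -g +ᵥ f n)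
    (hrange ▸ hf.vadd (-g)) fun x => by simpa using (hfg x).const_add (-g x)
  rwa [hrange, closedConvexHull_vadd, mem_vadd_set_iff_neg_vadd_mem, neg_neg, vadd_eq_add,
    add_zero] at h₀

end ContinuousMap

theorem tendsto_of_forall_mapClusterPt_comp {α : Type*} [TopologicalSpace α] {u : ℕ → α} {a : α}
    (h : ∀ ψ : ℕ → ℕ, StrictMono ψ → MapClusterPt a atTop (u ∘ ψ)) :
    Tendsto u atTop (𝓝 a) := by
  by_contra hu
  obtain ⟨U, hU, hfreq⟩ := not_tendsto_iff_exists_frequently_notMem.1 hu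
  obtain ⟨ψ, hψ, hψU⟩ := extraction_of_frequently_atTop hfreq
  obtain ⟨n, hn⟩ := ((h ψ hψ).frequently hU).exists
  exact hψU n hn

theorem MapClusterPt.eq_of_tendsto {α ι : Type*} [TopologicalSpace α] [T2Space α] {l : Filter ι}
    {u : ι → α} {a b : α} (ha : MapClusterPt a l u) (hb : Tendsto u l (𝓝 b)) : a = b :=
  eq_of_nhds_neBot (ha.neBot.mono (inf_le_inf_left _ hb))

theorem tendsto_of_eventually_dist_lt_inv_succ {α : Type*} [PseudoMetricSpace α] {u : ℕ → α}
    {a : α} (h : ∀ᶠ k in atTop, dist (u k) a < 1 / ((k : ℝ) + 1)) : Tendsto u atTop (𝓝 a) :=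
  tendsto_iff_dist_tendsto_zero.2 <| squeeze_zero' (.of_forall fun _ => dist_nonneg)
    (h.mono fun _ => le_of_lt) tendsto_one_div_add_atTop_nhds_zero_nat

theorem exists_finset_forall_exists_dist_lt {X E : Type*} [PseudoMetricSpace E] [ProperSpace E]
    {Φ : X → E} (hΦ : IsBounded (range Φ)) {δ : ℝ} (hδ : 0 < δ) :
    ∃ D : Finset X, ∀ x, ∃ d ∈ D, dist (Φ d) (Φ x) < δ := by
  obtain ⟨t, hts, ht, hcover⟩ := Metric.finite_approx_of_totallyBounded
    (hΦ.isCompact_closure.totallyBounded.subset subset_closure) δ hδ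
  rw [← image_univ] at hts
  obtain ⟨D, -, hD, hcover⟩ := exists_subset_image_finite_and
    (p := fun t => range Φ ⊆ ⋃ y ∈ t, Metric.ball y δ) |>.1 ⟨t, hts, ht, hcover⟩
  refine ⟨hD.toFinset, fun x => ?_⟩
  obtain ⟨_, ⟨d, hd, rfl⟩, hxd⟩ := mem_iUnion₂.1 (hcover (mem_range_self x))
  exact ⟨d, hD.mem_toFinset.2 hd, by rw [dist_comm]; exact hxd⟩

section Pointwise

variable {X : Type*} [TopologicalSpace X]

theorem exists_mem_forall_dist_lt_of_mem_closure {A : Set C(X, ℝ)} {g : X → ℝ}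
    (hg : g ∈ closure ((fun f : C(X, ℝ) => (f : X → ℝ)) '' A)) (D : Finset X) {δ : ℝ}
    (hδ : 0 < δ) : ∃ f ∈ A, ∀ d ∈ D, dist (f d) (g d) < δ := by
  obtain ⟨_, hU, f, hf, rfl⟩ := mem_closure_iff.1 hg _
    (isOpen_set_pi D.finite_toSet fun d _ => Metric.isOpen_ball (x := g d) (ε := δ))
    fun d _ => Metric.mem_ball_self hδ
  exact ⟨f, hf, hU⟩

variable [CompactSpace X]

theorem exists_common_net {g : X → ℝ} (hg : IsBounded (range g)) (S : Finset C(X, ℝ)) {δ : ℝ}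
    (hδ : 0 < δ) : ∃ D : Finset X, ∀ x, ∃ d ∈ D,
      dist (g d) (g x) < δ ∧ ∀ F ∈ S, dist (F d) (F x) < δ := by
  have hΦ : IsBounded (range fun x => (g x, fun F : S => (F : C(X, ℝ)) x)) := by
    refine (hg.prod (IsBounded.pi fun F : S =>
      (isCompact_range (F : C(X, ℝ)).continuous).isBounded)).subset ?_
    rintro _ ⟨x, rfl⟩
    exact ⟨mem_range_self x, fun F _ => mem_range_self x⟩
  obtain ⟨D, hD⟩ := exists_finset_forall_exists_dist_lt hΦ hδ
  refine ⟨D, fun x => ?_⟩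
  obtain ⟨d, hd, hdx⟩ := hD x
  rw [Prod.dist_eq, max_lt_iff] at hdx
  exact ⟨d, hd, hdx.1, fun F hF => (dist_le_pi_dist _ _ ⟨F, hF⟩).trans_lt hdx.2⟩

theorem exists_seq_tendsto_on_net {A : Set C(X, ℝ)} {g : X → ℝ}
    (hg : g ∈ closure ((fun f : C(X, ℝ) => (f : X → ℝ)) '' A)) (hg_bdd : IsBounded (range g)) :
    ∃ (f : ℕ → C(X, ℝ)) (E : Set X), (∀ n, f n ∈ A) ∧
      (∀ d ∈ E, Tendsto (fun n => f n d) atTop (𝓝 (g d))) ∧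
      ∀ x, ∃ d : ℕ → X, (∀ k, d k ∈ E) ∧ Tendsto (fun k => g (d k)) atTop (𝓝 (g x)) ∧
        ∀ i, Tendsto (fun k => f i (d k)) atTop (𝓝 (f i x)) := by
  classical
  have hδ : ∀ n : ℕ, (0 : ℝ) < 1 / ((n : ℝ) + 1) := fun n => by positivity
  choose appr happrA happr using fun (D : Finset X) (n : ℕ) =>
    exists_mem_forall_dist_lt_of_mem_closure hg D (hδ n)
  choose net hnet using fun (S : Finset C(X, ℝ)) (n : ℕ) => exists_common_net hg_bdd S (hδ n)
  -- `stage n = (Dₙ, {f 0, …, f (n - 1)})` with `f n` approximating `g` on `Dₙ`, and `Dₙ₊₁` is `Dₙ`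
  -- together with a net for `g` and `f 0, …, f n`.
  let stage : ℕ → Finset X × Finset C(X, ℝ) := fun n => Nat.rec (∅, ∅)
    (fun k p => (p.1 ∪ net (insert (appr p.1 k) p.2) k, insert (appr p.1 k) p.2)) n
  let f : ℕ → C(X, ℝ) := fun n => appr (stage n).1 n
  have hstage_mono : Monotone fun n => (stage n).1 :=
    monotone_nat_of_le_succ fun _ => Finset.subset_union_left
  have hf_mem : ∀ {i k}, i < k → f i ∈ (stage k).2 := by
    intro i k hik
    induction k with
    | zero => omega
    | succ k ih =>
      rcases (Nat.lt_succ_iff_lt_or_eq.1 hik) with hik | rfl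
      · exact Finset.mem_insert_of_mem (ih hik)
      · exact Finset.mem_insert_self _ _
  refine ⟨f, ⋃ n, ↑(stage n).1, fun n => happrA _ _, fun d hd => ?_, fun x => ?_⟩
  · obtain ⟨k, hk⟩ := mem_iUnion.1 hd
    exact tendsto_of_eventually_dist_lt_inv_succ <| eventually_atTop.2
      ⟨k, fun n hn => happr _ _ d (hstage_mono hn hk)⟩
  · choose d hd hdg hdf using fun k => hnet (stage (k + 1)).2 k x
    refine ⟨d, fun k => mem_iUnion.2 ⟨k + 1, Finset.mem_union_right _ (hd k)⟩,
      tendsto_of_eventually_dist_lt_inv_succ (.of_forall hdg), fun i => ?_⟩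
    exact tendsto_of_eventually_dist_lt_inv_succ <| eventually_atTop.2
      ⟨i, fun k hik => hdf k _ (hf_mem (Nat.lt_succ_of_le hik))⟩

theorem tendsto_of_tendsto_on_of_mapClusterPt {f : ℕ → C(X, ℝ)} {g : X → ℝ}
    (hcp : ∀ ψ : ℕ → ℕ, ∃ h : C(X, ℝ), MapClusterPt (h : X → ℝ) atTop fun n => ⇑(f (ψ n)))
    {E : Set X} (hE : ∀ d ∈ E, Tendsto (fun n => f n d) atTop (𝓝 (g d)))
    (hE_dense : ∀ x, ∃ d : ℕ → X, (∀ k, d k ∈ E) ∧ Tendsto (fun k => g (d k)) atTop (𝓝 (g x)) ∧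
      ∀ i, Tendsto (fun k => f i (d k)) atTop (𝓝 (f i x)))
    (x : X) : Tendsto (fun n => f n x) atTop (𝓝 (g x)) := by
  refine tendsto_of_forall_mapClusterPt_comp fun ψ hψ => ?_
  obtain ⟨h, hh⟩ := hcp ψ
  have hh_apply : ∀ y, MapClusterPt (h y) atTop fun n => f (ψ n) y := fun y =>
    hh.continuousAt_comp (continuous_apply y).continuousAt
  have hhE : ∀ d ∈ E, h d = g d := fun d hd =>
    (hh_apply d).eq_of_tendsto ((hE d hd).comp hψ.tendsto_atTop)
  obtain ⟨d, hdE, hdg, hdf⟩ := hE_dense x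
  obtain ⟨z, hz⟩ := exists_clusterPt_of_compactSpace (map d atTop)
  have hfz : ∀ i, f i z = f i x := fun i =>
    (MapClusterPt.continuousAt_comp (f i).continuous.continuousAt hz).eq_of_tendsto (hdf i)
  have hhz : h z = g x :=
    (MapClusterPt.continuousAt_comp h.continuous.continuousAt hz).eq_of_tendsto
      (hdg.congr fun k => (hhE _ (hdE k)).symm)
  simpa only [hhz, hfz, Function.comp_def] using hh_apply z

theorem exists_seq_tendsto_of_mem_closure {A : Set C(X, ℝ)}
    (hcp : ∀ f : ℕ → C(X, ℝ), (∀ n, f n ∈ A) →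
      ∃ g : C(X, ℝ), MapClusterPt (g : X → ℝ) atTop (fun n => (f n : X → ℝ)))
    {g : X → ℝ} (hg : g ∈ closure ((fun f : C(X, ℝ) => (f : X → ℝ)) '' A))
    (hg_bdd : IsBounded (range g)) :
    ∃ f : ℕ → C(X, ℝ), (∀ n, f n ∈ A) ∧ ∀ x, Tendsto (fun n => f n x) atTop (𝓝 (g x)) := by
  obtain ⟨f, E, hfA, hE, hE_dense⟩ := exists_seq_tendsto_on_net hg hg_bdd
  exact ⟨f, hfA, tendsto_of_tendsto_on_of_mapClusterPt (fun ψ => hcp _ fun n => hfA (ψ n))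
    hE hE_dense⟩

end Pointwise

/-- Definability of types: let `X` be compact and `A ⊆ C(X)` norm-bounded and
countably precompact for the topology of pointwise convergence.  Then every
function in the pointwise closure of `A` is the uniform limit of a sequence
from the convex hull of `A`. -/
theorem definability_of_types {X : Type*} [TopologicalSpace X] [CompactSpace X]
    (A : Set C(X, ℝ)) (hbdd : ∃ r : ℝ, ∀ f ∈ A, ∀ x : X, |f x| ≤ r)
    (hcp : ∀ f : ℕ → C(X, ℝ), (∀ n, f n ∈ A) →
      ∃ g : C(X, ℝ), MapClusterPt (g : X → ℝ) atTop (fun n => (f n : X → ℝ))) :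
    ∀ g ∈ closure ((fun f : C(X, ℝ) => (f : X → ℝ)) '' A),
      ∃ h : ℕ → C(X, ℝ), (∀ n, h n ∈ convexHull ℝ A) ∧
        TendstoUniformly (fun n => ⇑(h n)) g atTop := by
  intro g hg
  obtain ⟨r, hr⟩ := hbdd
  have hg_bdd : ∀ x, |g x| ≤ r := fun x => closure_minimal
    (by rintro _ ⟨f, hf, rfl⟩; exact hr f hf x)
    (isClosed_le (continuous_apply x).abs continuous_const) hg
  obtain ⟨f, hfA, hfg⟩ := exists_seq_tendsto_of_mem_closure hcp hg
    (isBounded_iff_forall_norm_le.2 ⟨r, by rintro _ ⟨x, rfl⟩; exact hg_bdd x⟩)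
  obtain ⟨h₀, hh₀⟩ := hcp f hfA
  have hh₀g : (h₀ : X → ℝ) = g := hh₀.eq_of_tendsto (tendsto_pi_nhds.2 hfg)
  have hf_bdd : IsBounded (range f) := isBounded_iff_forall_norm_le.2 ⟨max r 0, by
    rintro _ ⟨n, rfl⟩
    exact ((f n).norm_le (le_max_right _ _)).2 fun x => (hr _ (hfA n) x).trans (le_max_left _ _)⟩
  have hmem := ContinuousMap.mem_closedConvexHull_of_tendsto hf_bdd (g := h₀)
    (by simpa [hh₀g] using hfg)
  rw [closedConvexHull_eq_closure_convexHull] at hmem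
  obtain ⟨h, hh, hlim⟩ := mem_closure_iff_seq_limit.1 hmem
  refine ⟨h, fun n => convexHull_mono (range_subset_iff.2 hfA) (hh n), ?_⟩
  rw [← hh₀g]
  exact ContinuousMap.tendsto_iff_tendstoUniformly.1 hlim
end

section
/- Let X be a compact topological space and let A be a norm-bounded subset of C(X) with the interchangeable double limits property: for every sequence (f_n) in A and every sequence (x_m) in X, lim_n lim_m f_n(x_m) = lim_m lim_n f_n(x_m) whenever both iterated limits exist. Then conv(A), the convex hull of A, also has the interchangeable double limits property. -/
/-!
Write each `g n` as a convex combination of members of `A`. Only countably many functions occur,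
so along a subsequence `x ∘ φ` all of them converge, necessarily to their values at one point `x₀`.
Record such an `f` by the vector `(f x₀, (f (x (φ l)))ₗ)`: the closure `K` of these vectors is
compact, and the double limits property of `A` gives `b.2 l → b.1` for every `b ∈ K`. Evaluated at
`x₀` or at `x (φ l)`, each `g n` is the integral of the corresponding coordinate against a finitely
supported probability measure on `K`. A weak limit `μ` of a subsequence of these measures gives
`L₁ = ∫ b.1 dμ` and `z (φ l) = ∫ b.2 l dμ`, and dominated convergence turns the latter into
`L₂ = ∫ b.1 dμ`.
-/

open Filter Topology

/-- A set `A` of continuous functions on `X` has the interchangeable double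
limits property if for all sequences `(f_n) ⊆ A` and `(x_m) ⊆ X`, the two
iterated limits agree whenever both exist. -/
def InterchangeableDoubleLimits {X : Type*} [TopologicalSpace X] (A : Set C(X, ℝ)) : Prop :=
  ∀ f : ℕ → C(X, ℝ), (∀ n, f n ∈ A) → ∀ x : ℕ → X,
    ∀ y z : ℕ → ℝ, ∀ L₁ L₂ : ℝ,
      (∀ n, Tendsto (fun m => f n (x m)) atTop (𝓝 (y n))) →
      Tendsto y atTop (𝓝 L₁) →
      (∀ m, Tendsto (fun n => f n (x m)) atTop (𝓝 (z m))) →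
      Tendsto z atTop (𝓝 L₂) →
      L₁ = L₂

open MeasureTheory Set

theorem ContinuousMap.exists_subseq_tendsto_comp {X Y : Type*} [TopologicalSpace X]
    [CompactSpace X] [TopologicalSpace Y] [TopologicalSpace.PseudoMetrizableSpace Y]
    {S : Set C(X, Y)} (hS : S.Countable) (x : ℕ → X) :
    ∃ x₀ : X, ∃ φ : ℕ → ℕ, StrictMono φ ∧
      ∀ f ∈ S, Tendsto (fun l => f (x (φ l))) atTop (𝓝 (f x₀)) := by
  have : Countable S := hS.to_subtype
  have hev : Continuous fun (p : X) (f : S) => f.1 p := continuous_pi fun f => f.1.continuous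
  obtain ⟨_, ⟨x₀, rfl⟩, φ, hφ, hlim⟩ :=
    (isCompact_range hev).tendsto_subseq fun l => mem_range_self (x l)
  exact ⟨x₀, φ, hφ, fun f hf => tendsto_pi_nhds.mp hlim ⟨f, hf⟩⟩

theorem MeasureTheory.ProbabilityMeasure.exists_subseq_tendsto_sum_mul_integral {Ω : Type*}
    [TopologicalSpace Ω] [CompactSpace Ω] [TopologicalSpace.MetrizableSpace Ω]
    [MeasurableSpace Ω] [BorelSpace Ω] {ι : ℕ → Type*} [∀ n, Fintype (ι n)]
    (w : ∀ n, ι n → ℝ) (hw0 : ∀ n i, 0 ≤ w n i) (hw1 : ∀ n, ∑ i, w n i = 1)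
    (p : ∀ n, ι n → Ω) :
    ∃ μ : ProbabilityMeasure Ω, ∃ ψ : ℕ → ℕ, StrictMono ψ ∧ ∀ h : C(Ω, ℝ),
      Tendsto (fun m => ∑ i, w (ψ m) i * h (p (ψ m) i)) atTop (𝓝 (∫ ω, h ω ∂μ)) := by
  let μs (n : ℕ) : ProbabilityMeasure Ω :=
    ⟨Measure.sum fun i => ENNReal.ofReal (w n i) • Measure.dirac (p n i),
      HasSum.isProbabilityMeasure_sum_dirac (hw0 n) (hw1 n ▸ hasSum_fintype (w n))⟩
  have hμs (n : ℕ) (h : Ω → ℝ) : ∫ ω, h ω ∂(μs n : Measure Ω) = ∑ i, w n i * h (p n i) := by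
    simp only [μs, ProbabilityMeasure.coe_mk, Measure.sum_fintype]
    rw [integral_finsetSum_measure fun i _ =>
      (integrable_dirac (by simp)).smul_measure ENNReal.ofReal_ne_top]
    simp [integral_smul_measure, ENNReal.toReal_ofReal (hw0 n _)]
  obtain ⟨μ, ψ, hψ, hlim⟩ := CompactSpace.tendsto_subseq μs
  refine ⟨μ, ψ, hψ, fun h => ?_⟩
  simpa [hμs] using ProbabilityMeasure.tendsto_iff_forall_integral_tendsto.mp hlim
    (BoundedContinuousFunction.mkOfCompact h)

section EvalPointSeq

variable {X : Type*} [TopologicalSpace X]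

def ContinuousMap.evalPointSeq (x₀ : X) (x : ℕ → X) (f : C(X, ℝ)) : ℝ × (ℕ → ℝ) :=
  (f x₀, fun l => f (x l))

theorem closure_image_evalPointSeq_subset {S : Set C(X, ℝ)} {r : ℝ}
    (hr : ∀ f ∈ S, ∀ p, |f p| ≤ r) (x₀ : X) (x : ℕ → X) :
    closure (ContinuousMap.evalPointSeq x₀ x '' S) ⊆
      Icc (-r) r ×ˢ univ.pi fun _ => Icc (-r) r := by
  refine closure_minimal ?_ (isClosed_Icc.prod (isClosed_set_pi fun _ _ => isClosed_Icc))
  rintro _ ⟨f, hf, rfl⟩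
  exact ⟨abs_le.mp (hr f hf x₀), fun l _ => abs_le.mp (hr f hf (x l))⟩

theorem isCompact_closure_image_evalPointSeq {S : Set C(X, ℝ)} {r : ℝ}
    (hr : ∀ f ∈ S, ∀ p, |f p| ≤ r) (x₀ : X) (x : ℕ → X) :
    IsCompact (closure (ContinuousMap.evalPointSeq x₀ x '' S)) :=
  (isCompact_Icc.prod (isCompact_univ_pi fun _ => isCompact_Icc)).of_isClosed_subset
    isClosed_closure (closure_image_evalPointSeq_subset hr x₀ x)

namespace InterchangeableDoubleLimits

variable {A : Set C(X, ℝ)}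

theorem tendsto_of_isBounded_range (hA : InterchangeableDoubleLimits A) {f : ℕ → C(X, ℝ)}
    (hfA : ∀ k, f k ∈ A) {x : ℕ → X} {x₀ : X}
    (hfx : ∀ k, Tendsto (fun l => f k (x l)) atTop (𝓝 (f k x₀)))
    {c : ℝ} (hc : Tendsto (fun k => f k x₀) atTop (𝓝 c))
    {b : ℕ → ℝ} (hb : ∀ l, Tendsto (fun k => f k (x l)) atTop (𝓝 (b l)))
    (hbdd : Bornology.IsBounded (range b)) : Tendsto b atTop (𝓝 c) := by
  refine tendsto_of_subseq_tendsto fun ns hns => ?_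
  obtain ⟨c', -, ms, hms, hc'⟩ := tendsto_subseq_of_bounded hbdd fun l => mem_range_self (ns l)
  have hcc' : c = c' := hA f hfA (x ∘ ns ∘ ms) _ _ c c'
    (fun k => (hfx k).comp (hns.comp hms.tendsto_atTop)) hc (fun l => hb _) hc'
  exact ⟨ms, hcc' ▸ hc'⟩

variable {S : Set C(X, ℝ)} {r : ℝ} {x : ℕ → X} {x₀ : X}

theorem tendsto_of_mem_closure (hA : InterchangeableDoubleLimits A) (hSA : S ⊆ A)
    (hr : ∀ f ∈ S, ∀ p, |f p| ≤ r) (hS : ∀ f ∈ S, Tendsto (fun l => f (x l)) atTop (𝓝 (f x₀)))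
    {b : ℝ × (ℕ → ℝ)} (hb : b ∈ closure (ContinuousMap.evalPointSeq x₀ x '' S)) :
    Tendsto b.2 atTop (𝓝 b.1) := by
  obtain ⟨_, hu, hlim⟩ := mem_closure_iff_seq_limit.mp hb
  choose f hfS hfu using hu
  obtain rfl : ContinuousMap.evalPointSeq x₀ x ∘ f = _ := funext hfu
  have hbdd : range b.2 ⊆ Icc (-r) r := by
    rintro _ ⟨l, rfl⟩
    exact (closure_image_evalPointSeq_subset hr x₀ x hb).2 l (mem_univ l)
  exact hA.tendsto_of_isBounded_range (fun k => hSA (hfS k)) (fun k => hS _ (hfS k))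
    (continuous_fst.continuousAt.tendsto.comp hlim)
    (fun l => ((continuous_apply l).comp continuous_snd).continuousAt.tendsto.comp hlim)
    (Metric.isBounded_Icc _ _ |>.subset hbdd)

theorem tendsto_integral_closure_image_evalPointSeq (hA : InterchangeableDoubleLimits A) (hSA : S ⊆ A)
    (hr : ∀ f ∈ S, ∀ p, |f p| ≤ r) (hS : ∀ f ∈ S, Tendsto (fun l => f (x l)) atTop (𝓝 (f x₀)))
    (μ : Measure (closure (ContinuousMap.evalPointSeq x₀ x '' S))) [IsFiniteMeasure μ] :
    Tendsto (fun l => ∫ b, b.1.2 l ∂μ) atTop (𝓝 (∫ b, b.1.1 ∂μ)) :=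
  tendsto_integral_filter_of_norm_le_const (.of_forall fun l => by fun_prop)
    ⟨r, .of_forall fun l => ae_of_all _ fun b =>
      abs_le.mpr ((closure_image_evalPointSeq_subset hr x₀ x b.2).2 l (mem_univ l))⟩
    (ae_of_all _ fun b => hA.tendsto_of_mem_closure hSA hr hS b.2)

end InterchangeableDoubleLimits

end EvalPointSeq

/-- If a norm-bounded `A ⊆ C(X)` (with `X` compact) has the interchangeable
double limits property, then so does its convex hull. -/
theorem convexHull_interchangeable_double_limits {X : Type*} [TopologicalSpace X]
    [CompactSpace X] (A : Set C(X, ℝ))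
    (hbdd : ∃ r : ℝ, ∀ f ∈ A, ∀ x : X, |f x| ≤ r)
    (hA : InterchangeableDoubleLimits A) :
    InterchangeableDoubleLimits (convexHull ℝ A) := by
  obtain ⟨r, hr⟩ := hbdd
  intro g hg x y z L₁ L₂ hy hyL hz hzL
  choose ι _ w F hw0 hw1 hFA hgF using fun n => mem_convexHull_iff_exists_fintype.mp (hg n)
  have hg_apply (n : ℕ) (p : X) : g n p = ∑ i, w n i * F n i p := by simp [← hgF n]
  let S := ⋃ n, range (F n)
  have hSA : S ⊆ A := iUnion_subset fun n => range_subset_iff.mpr (hFA n)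
  have hrS : ∀ f ∈ S, ∀ p, |f p| ≤ r := fun f hf => hr f (hSA hf)
  obtain ⟨x₀, φ, hφ, hx₀⟩ := ContinuousMap.exists_subseq_tendsto_comp
    ((countable_range g).union (countable_iUnion fun n => (finite_range (F n)).countable)) x
  have hgy (n : ℕ) : g n x₀ = y n :=
    tendsto_nhds_unique (hx₀ _ (.inl ⟨n, rfl⟩)) ((hy n).comp hφ.tendsto_atTop)
  let K := closure (ContinuousMap.evalPointSeq x₀ (x ∘ φ) '' S)
  have : CompactSpace K := isCompact_iff_compactSpace.mp <|
    isCompact_closure_image_evalPointSeq hrS x₀ (x ∘ φ)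
  obtain ⟨μ, ψ, hψ, hμ⟩ := ProbabilityMeasure.exists_subseq_tendsto_sum_mul_integral w hw0 hw1
    fun n i => (⟨_, subset_closure (mem_image_of_mem _ (mem_iUnion_of_mem n ⟨i, rfl⟩))⟩ : K)
  have hyμ : Tendsto (fun m => y (ψ m)) atTop (𝓝 (∫ b : K, b.1.1 ∂μ)) :=
    (hμ ⟨fun b => b.1.1, by fun_prop⟩).congr fun m => by
      simp [← hgy, hg_apply, ContinuousMap.evalPointSeq]
  have hzμ (l : ℕ) : z (φ l) = ∫ b : K, b.1.2 l ∂μ :=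
    tendsto_nhds_unique ((hz (φ l)).comp hψ.tendsto_atTop) <|
      (hμ ⟨fun b => b.1.2 l, by fun_prop⟩).congr fun m => by
        simp [hg_apply, ContinuousMap.evalPointSeq]
  calc L₁ = ∫ b : K, b.1.1 ∂μ := tendsto_nhds_unique (hyL.comp hψ.tendsto_atTop) hyμ
    _ = L₂ := tendsto_nhds_unique
      ((hA.tendsto_integral_closure_image_evalPointSeq hSA hrS (fun f hf => hx₀ f (.inr hf)) (μ : Measure K)).congr
        fun l => (hzμ l).symm) (hzL.comp hφ.tendsto_atTop)
end

section
/- Let Y be a real normed space and let A ⊆ Y be bounded. If A is countably precompact for the weak topology (every sequence in A has a weak cluster point in Y), then A is precompact for the weak topology, i.e., the weak closure of A in Y is weakly compact. -/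
/-!
Embed `Y` with its weak topology into the bidual with its weak-* topology. By Banach–Alaoglu the
weak-* closure of the bounded set `A` is compact, so it suffices to show that every `z` in it comes
from `Y`. Following Whitley, build alternately finite sets of functionals half-norming the span of
`z` and of the differences `z - aₖ` found so far, and points `aₙ ∈ A` approximating `z` to within
`1/(n+1)` on all functionals chosen so far. A weak cluster point `y` of `(aₙ)` agrees with `z` on
the countable set `D` of all chosen functionals and lies in the closed span of the `aₙ`. So `z` and
`y` both lie in the closure of a subspace half-normed by `D` and agree on `D`, hence `z = y`.
-/

open Filter Topology Metric Set NormedSpace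

section Whitley

variable {W Z : Type*} [DecidableEq W] [DecidableEq Z] [Sub Z]
  (Φ : Finset Z → Finset W) (Ψ : Finset W → ℕ → Z) (z : Z)

/-- In the application `Φ V` is a finite set half-norming the span of `V`, and `Ψ F n ∈ A`
approximates `z` to within `1/(n+1)` on `F`. -/
def whitleySeq : ℕ → Finset W × Finset Z
  | 0 => (Φ {z}, {z})
  | n + 1 =>
    let V := insert (z - Ψ (whitleySeq n).1 n) (whitleySeq n).2
    ((whitleySeq n).1 ∪ Φ V, V)

theorem monotone_whitleySeq_fst : Monotone fun n => (whitleySeq Φ Ψ z n).1 :=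
  monotone_nat_of_le_succ fun _ => Finset.subset_union_left

theorem monotone_whitleySeq_snd : Monotone fun n => (whitleySeq Φ Ψ z n).2 :=
  monotone_nat_of_le_succ fun _ => Finset.subset_insert _ _

theorem subset_whitleySeq_fst (n : ℕ) : Φ (whitleySeq Φ Ψ z n).2 ⊆ (whitleySeq Φ Ψ z n).1 := by
  cases n with
  | zero => exact Finset.Subset.refl _
  | succ n => exact Finset.subset_union_right

end Whitley

section HalfNorming

variable {X F : Type*} [NormedAddCommGroup X] [NormedSpace ℝ X]
  [NormedAddCommGroup F] [NormedSpace ℝ F]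

def IsHalfNorming (D : Set X) (P : Set (X →L[ℝ] F)) : Prop :=
  D ⊆ closedBall 0 1 ∧ ∀ e ∈ P, e ≠ 0 → ∃ x ∈ D, ‖e‖ < 2 * ‖e x‖

theorem exists_finset_isHalfNorming (E : Submodule ℝ (X →L[ℝ] F)) [FiniteDimensional ℝ E] :
    ∃ D : Finset X, IsHalfNorming (D : Set X) (E : Set (X →L[ℝ] F)) := by
  let U : closedBall (0 : X) 1 → Set E := fun x => {e | ‖e‖ < 2 * ‖(e : X →L[ℝ] F) x‖}
  have hU : ∀ x, IsOpen (U x) := fun x =>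
    isOpen_lt continuous_norm (by fun_prop)
  have hcover : sphere (0 : E) 1 ⊆ ⋃ x, U x := by
    intro e he
    have he1 : ‖(e : X →L[ℝ] F)‖ = 1 := by simpa using he
    obtain ⟨x, hx, hex⟩ := (e : X →L[ℝ] F).exists_lt_apply_of_lt_opNorm (r := 1 / 2) (by linarith)
    refine mem_iUnion.2 ⟨⟨x, mem_closedBall_zero_iff.2 hx.le⟩, ?_⟩
    change ‖(e : X →L[ℝ] F)‖ < 2 * ‖(e : X →L[ℝ] F) x‖
    linarith
  obtain ⟨t, ht⟩ := (isCompact_sphere (0 : E) 1).elim_finite_subcover U hU hcover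
  refine ⟨t.map (Function.Embedding.subtype _), ?_, fun e he hne => ?_⟩
  · intro x hx
    obtain ⟨x, -, rfl⟩ := Finset.mem_map.1 hx
    exact x.2
  · have hpos : 0 < ‖e‖ := norm_pos_iff.2 hne
    let u : E := ⟨‖e‖⁻¹ • e, E.smul_mem _ he⟩
    have hu : u ∈ sphere (0 : E) 1 := by
      simp [u, norm_smul, hpos.ne']
    obtain ⟨x, hxt, hxu⟩ := mem_iUnion₂.1 (ht hu)
    refine ⟨x, Finset.mem_map_of_mem _ hxt, ?_⟩
    have : ‖e‖⁻¹ * ‖e‖ < 2 * (‖e‖⁻¹ * ‖e x‖) := by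
      simpa [U, u, norm_smul, hpos.ne'] using hxu
    nlinarith [inv_pos.2 hpos]

theorem IsHalfNorming.eq_zero_of_mem_closure {D : Set X} {P : Submodule ℝ (X →L[ℝ] F)}
    (hP : IsHalfNorming D (P : Set (X →L[ℝ] F))) {w : X →L[ℝ] F} (hw : w ∈ closure (P : Set _))
    (hwD : ∀ x ∈ D, w x = 0) : w = 0 := by
  have key : ∀ e ∈ P, ‖w‖ ≤ 3 * ‖w - e‖ := by
    intro e he
    have hle : ‖e‖ ≤ 2 * ‖w - e‖ := by
      rcases eq_or_ne e 0 with rfl | hne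
      · simp
      obtain ⟨x, hxD, hx⟩ := hP.2 e he hne
      have hxe : ‖e x‖ ≤ ‖w - e‖ := calc
        ‖e x‖ = ‖(w - e) x‖ := by simp [hwD x hxD]
        _ ≤ ‖w - e‖ * ‖x‖ := (w - e).le_opNorm x
        _ ≤ ‖w - e‖ := mul_le_of_le_one_right (norm_nonneg _) (by simpa using hP.1 hxD)
      linarith
    linarith [norm_le_norm_sub_add w e]
  have hclosed : IsClosed {e : X →L[ℝ] F | ‖w‖ ≤ 3 * ‖w - e‖} :=
    isClosed_le continuous_const (by fun_prop)
  have hw0 : ‖w‖ ≤ 3 * ‖w - w‖ := closure_minimal key hclosed hw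
  simpa using hw0

theorem IsHalfNorming.eq_of_mem_closure {D : Set X} {P : Submodule ℝ (X →L[ℝ] F)}
    (hP : IsHalfNorming D (P : Set (X →L[ℝ] F))) {w w' : X →L[ℝ] F}
    (hw : w ∈ closure (P : Set _)) (hw' : w' ∈ closure (P : Set _))
    (hD : ∀ x ∈ D, w x = w' x) : w = w' := by
  rw [← Submodule.topologicalClosure_coe] at hw hw'
  refine sub_eq_zero.1 (hP.eq_zero_of_mem_closure ?_ fun x hx => by simp [hD x hx])
  rw [← Submodule.topologicalClosure_coe]
  exact P.topologicalClosure.sub_mem hw hw'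

theorem isHalfNorming_iUnion {ι : Type*} {D : ι → Set X} {P : ι → Set (X →L[ℝ] F)}
    (h : ∀ i, IsHalfNorming (D i) (P i)) : IsHalfNorming (⋃ i, D i) (⋃ i, P i) := by
  refine ⟨iUnion_subset fun i => (h i).1, fun e he hne => ?_⟩
  obtain ⟨i, hi⟩ := mem_iUnion.1 he
  obtain ⟨x, hx, hlt⟩ := (h i).2 e hi hne
  exact ⟨x, mem_iUnion.2 ⟨i, hx⟩, hlt⟩

theorem exists_seq_isHalfNorming_of_forall_approx {B : Set (StrongDual ℝ X)} {z : StrongDual ℝ X}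
    (hz : ∀ (G : Finset X) (ε : ℝ), 0 < ε → ∃ b ∈ B, ∀ x ∈ G, dist (b x) (z x) < ε) :
    ∃ (b : ℕ → StrongDual ℝ X) (D : Set X) (P : Submodule ℝ (StrongDual ℝ X)),
      (∀ n, b n ∈ B) ∧ (∀ x ∈ D, Tendsto (fun n => b n x) atTop (𝓝 (z x))) ∧
      z ∈ P ∧ (∀ n, b n ∈ P) ∧ IsHalfNorming D (P : Set (StrongDual ℝ X)) := by
  classical
  choose Φ hΦ using fun V : Finset (StrongDual ℝ X) =>
    exists_finset_isHalfNorming (Submodule.span ℝ (V : Set (StrongDual ℝ X)))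
  choose Ψ hΨB hΨ using fun (G : Finset X) (n : ℕ) =>
    hz G (1 / (n + 1)) Nat.one_div_pos_of_nat
  set s := whitleySeq Φ Ψ z
  let V n := Submodule.span ℝ ((s n).2 : Set (StrongDual ℝ X))
  have hV : Monotone V := fun m n h =>
    Submodule.span_mono (by exact_mod_cast monotone_whitleySeq_snd Φ Ψ z h)
  have hzV : z ∈ ⨆ n, V n :=
    Submodule.mem_iSup_of_mem 0 (Submodule.subset_span (by simp [s, whitleySeq]))
  refine ⟨fun n => Ψ (s n).1 n, ⋃ n, (Φ (s n).2 : Set X), ⨆ n, V n, fun n => hΨB _ _,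
    ?_, hzV, fun n => ?_, ?_⟩
  · intro x hx
    obtain ⟨N, hN⟩ := mem_iUnion.1 hx
    rw [tendsto_iff_dist_tendsto_zero]
    refine squeeze_zero' (Eventually.of_forall fun _ => dist_nonneg) ?_
      tendsto_one_div_add_atTop_nhds_zero_nat
    filter_upwards [eventually_ge_atTop N] with n hn
    exact (hΨ _ n x (monotone_whitleySeq_fst Φ Ψ z hn (subset_whitleySeq_fst Φ Ψ z N hN))).le
  · have hsub : z - Ψ (s n).1 n ∈ ⨆ n, V n :=
      Submodule.mem_iSup_of_mem (n + 1) (Submodule.subset_span (Finset.mem_insert_self _ _))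
    simpa using Submodule.sub_mem _ hzV hsub
  · rw [Submodule.coe_iSup_of_directed V hV.directed_le]
    exact isHalfNorming_iUnion fun n => hΦ (s n).2

end HalfNorming

section WeakTopology

variable {Y : Type*} [NormedAddCommGroup Y] [NormedSpace ℝ Y]

theorem apply_eq_of_mapClusterPt_toWeakSpace {ι : Type*} {l : Filter ι} {u : ι → Y} {y : Y}
    (hy : MapClusterPt (toWeakSpace ℝ Y y) l (fun n => toWeakSpace ℝ Y (u n)))
    (f : StrongDual ℝ Y) {L : ℝ} (hf : Tendsto (fun n => f (u n)) l (𝓝 L)) : f y = L := by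
  have hcont : Continuous fun w : WeakSpace ℝ Y => f ((toWeakSpace ℝ Y).symm w) :=
    WeakBilin.eval_continuous _ f
  have hfy : MapClusterPt (f y) l (fun n => f (u n)) := by
    simpa [Function.comp_def] using hy.tendsto_comp (hcont.tendsto _)
  exact eq_of_nhds_neBot (hfy.clusterPt.mono hf)

theorem mem_closure_span_of_mapClusterPt_toWeakSpace {ι : Type*} {l : Filter ι} {u : ι → Y}
    {y : Y} (hy : MapClusterPt (toWeakSpace ℝ Y y) l (fun n => toWeakSpace ℝ Y (u n))) :
    y ∈ closure (Submodule.span ℝ (range u) : Set Y) := by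
  have hclosed : IsClosed (toWeakSpace ℝ Y '' closure (Submodule.span ℝ (range u) : Set Y)) := by
    rw [Convex.toWeakSpace_closure ℝ (Submodule.convex _)]
    exact isClosed_closure
  have hmem := hclosed.mem_of_mapClusterPt hy <| Eventually.of_forall fun n =>
    mem_image_of_mem _ (subset_closure (Submodule.subset_span (mem_range_self n)))
  exact (toWeakSpace ℝ Y).injective.mem_set_image.1 hmem

theorem mem_range_inclusionInDoubleDual_of_forall_approx {A : Set Y}
    (hcp : ∀ u : ℕ → Y, (∀ n, u n ∈ A) →
      ∃ y : Y, MapClusterPt (toWeakSpace ℝ Y y) atTop (fun n => toWeakSpace ℝ Y (u n)))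
    {z : StrongDual ℝ (StrongDual ℝ Y)}
    (hz : ∀ (G : Finset (StrongDual ℝ Y)) (ε : ℝ), 0 < ε → ∃ a ∈ A, ∀ f ∈ G, dist (f a) (z f) < ε) :
    z ∈ range (inclusionInDoubleDual ℝ Y) := by
  set T := inclusionInDoubleDual ℝ Y
  obtain ⟨b, D, P, hbA, hbD, hzP, hbP, hP⟩ :=
    exists_seq_isHalfNorming_of_forall_approx (B := T '' A) (z := z) fun G ε hε => by
      obtain ⟨a, ha, h⟩ := hz G ε hε
      exact ⟨T a, mem_image_of_mem T ha, h⟩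
  choose a haA hab using hbA
  obtain rfl : (fun n => T (a n)) = b := funext hab
  obtain ⟨y, hy⟩ := hcp a haA
  have hTy : T y ∈ closure (P : Set (StrongDual ℝ (StrongDual ℝ Y))) := by
    have hspan : Submodule.span ℝ (range a) ≤ P.comap (T : Y →ₗ[ℝ] _) :=
      Submodule.span_le.2 (by rintro _ ⟨n, rfl⟩; exact hbP n)
    refine closure_mono ?_ <| image_closure_subset_closure_image T.continuous <|
      mem_image_of_mem T (mem_closure_span_of_mapClusterPt_toWeakSpace hy)
    rintro _ ⟨v, hv, rfl⟩
    exact hspan hv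
  have hagree : ∀ f ∈ D, z f = T y f := fun f hf => by
    have hlim : Tendsto (fun n => f (a n)) atTop (𝓝 (z f)) := by simpa [T] using hbD f hf
    simp [T, apply_eq_of_mapClusterPt_toWeakSpace hy f hlim]
  exact ⟨y, (hP.eq_of_mem_closure (subset_closure hzP) hTy hagree).symm⟩

theorem WeakDual.exists_mem_forall_dist_lt_of_mem_closure {E : Type*} [NormedAddCommGroup E]
    [NormedSpace ℝ E] {S : Set (WeakDual ℝ E)} {x : WeakDual ℝ E} (hx : x ∈ closure S)
    (G : Finset E) {ε : ℝ} (hε : 0 < ε) : ∃ w ∈ S, ∀ f ∈ G, dist (w f) (x f) < ε := by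
  have hopen : IsOpen (⋂ f ∈ G, (fun w : WeakDual ℝ E => w f) ⁻¹' ball (x f) ε) :=
    isOpen_biInter_finset fun f _ => isOpen_ball.preimage (WeakDual.eval_continuous f)
  obtain ⟨w, hwG, hwS⟩ := mem_closure_iff.1 hx _ hopen (by simp [hε])
  exact ⟨w, hwS, by simpa using hwG⟩

theorem closure_image_inclusionInDoubleDualWeak_subset_range {A : Set Y}
    (hcp : ∀ u : ℕ → Y, (∀ n, u n ∈ A) →
      ∃ y : Y, MapClusterPt (toWeakSpace ℝ Y y) atTop (fun n => toWeakSpace ℝ Y (u n))) :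
    closure (inclusionInDoubleDualWeak ℝ Y '' (toWeakSpace ℝ Y '' A)) ⊆
      range (inclusionInDoubleDualWeak ℝ Y) := by
  intro x hx
  obtain ⟨y, hy⟩ := mem_range_inclusionInDoubleDual_of_forall_approx hcp
    (z := WeakDual.toStrongDual x) fun G ε hε => by
      obtain ⟨_, ⟨_, ⟨a, ha, rfl⟩, rfl⟩, h⟩ :=
        WeakDual.exists_mem_forall_dist_lt_of_mem_closure hx G hε
      exact ⟨a, ha, h⟩
  exact ⟨toWeakSpace ℝ Y y, DFunLike.ext _ _ fun f => DFunLike.congr_fun hy f⟩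

end WeakTopology

/-- Eberlein–Šmulian, direction (iii) ⇒ (i): if a bounded subset `A` of a
normed space `Y` is countably precompact for the weak topology (every sequence
in `A` has a weak cluster point in `Y`), then the weak closure of `A` is weakly
compact. -/
theorem weakly_countably_precompact_implies_weakly_precompact
    (Y : Type*) [NormedAddCommGroup Y] [NormedSpace ℝ Y] (A : Set Y)
    (hbdd : ∃ r : ℝ, ∀ a ∈ A, ‖a‖ ≤ r)
    (hcp : ∀ u : ℕ → Y, (∀ n, u n ∈ A) →
      ∃ y : Y, MapClusterPt (toWeakSpace ℝ Y y) atTop (fun n => toWeakSpace ℝ Y (u n))) :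
    IsCompact (closure (toWeakSpace ℝ Y '' A)) := by
  refine isCompact_closure_of_isBounded ℝ Y _ ?_
    (closure_image_inclusionInDoubleDualWeak_subset_range hcp)
  rw [preimage_image_eq _ (toWeakSpace ℝ Y).injective]
  exact isBounded_iff_forall_norm_le.2 hbdd
end

section
/- (Rosenthal's ℓ¹ dichotomy) Let E be a real Banach space and let (x_n) be a bounded sequence in E. Then either (x_n) has a weakly Cauchy subsequence, or (x_n) has a subsequence (x_{n_k}) equivalent to the unit vector basis of ℓ¹, i.e., there exists δ > 0 such that for every finitely supported sequence of reals (a_k), δ · ∑_k |a_k| ≤ ‖∑_k a_k x_{n_k}‖. -/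
/-!
Rosenthal's Ramsey argument. For rationals `p < q`, call a finite set `F` of indices realizable
if some functional of norm at most one is alternately `≥ q` and `≤ p` at the terms `x a`, `a ∈ F`,
taken in increasing order. By the Nash-Williams theorem (proved by the accept/reject argument of
Galvin and Prikry), every infinite set of indices contains an infinite set all of whose finite
subsets are realizable, or one along which every increasing sequence has a non-realizable initial
segment. If the first case occurs for some `p < q`, every sign pattern on a subsequence is realized
by some functional, and comparing the functionals for a pattern and its opposite gives the `ℓ¹`
lower bound with `δ = (q - p) / 2`. Otherwise, diagonalizing over all rational pairs yields a
subsequence along which no functional of norm at most one oscillates across any `p < q`; being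
bounded, its values converge.
-/

open Filter Topology Set

theorem Set.Infinite.inter_Ioi {M : Set ℕ} (hM : M.Infinite) (a : ℕ) : (M ∩ Ioi a).Infinite := by
  simpa [sdiff_eq, compl_Iic] using hM.sdiff (finite_Iic a)

theorem exists_infinite_subset_forall_mem_finset {ι : Type*} (P : ι → Set ℕ → Prop)
    (hmono : ∀ i {M M' : Set ℕ}, M' ⊆ M → P i M → P i M')
    (hex : ∀ i {M : Set ℕ}, M.Infinite → ∃ M' ⊆ M, M'.Infinite ∧ P i M')
    (s : Finset ι) {M : Set ℕ} (hM : M.Infinite) :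
    ∃ M' ⊆ M, M'.Infinite ∧ ∀ i ∈ s, P i M' := by
  classical
  induction s using Finset.induction_on with
  | empty => exact ⟨M, subset_rfl, hM, by simp⟩
  | insert i s _ ih =>
    obtain ⟨M₁, hM₁, hM₁inf, hs⟩ := ih
    obtain ⟨M₂, hM₂, hM₂inf, hi⟩ := hex i hM₁inf
    refine ⟨M₂, hM₂.trans hM₁, hM₂inf, (Finset.forall_mem_insert _ _ _).2 ⟨hi, ?_⟩⟩
    exact fun j hj => hmono j hM₂ (hs j hj)

theorem exists_infinite_subset_forall_inter_Ioi (Q : ℕ → Set ℕ → Prop)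
    (hmono : ∀ n {M M' : Set ℕ}, M' ⊆ M → Q n M → Q n M')
    (hex : ∀ n {M : Set ℕ}, M.Infinite → ∃ M' ⊆ M, M'.Infinite ∧ Q n M')
    {M : Set ℕ} (hM : M.Infinite) :
    ∃ D ⊆ M, D.Infinite ∧ ∀ n ∈ D, Q n (D ∩ Ioi n) := by
  have step (M : Set ℕ) (hM : M.Infinite) :
      ∃ M' ⊆ M ∩ Ioi (sInf M), M'.Infinite ∧ Q (sInf M) M' :=
    hex _ (hM.inter_Ioi _)
  choose! next hsub hinf hQ using step
  set Ms : ℕ → Set ℕ := fun k => next^[k] M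
  have hMs_succ (k : ℕ) : Ms (k + 1) = next (Ms k) := Function.iterate_succ_apply' ..
  have hMs_inf (k : ℕ) : (Ms k).Infinite := by
    induction k with
    | zero => exact hM
    | succ k ih => rw [hMs_succ]; exact hinf _ ih
  have hMs_anti : Antitone Ms := antitone_nat_of_succ_le fun k => by
    rw [hMs_succ]; exact (hsub _ (hMs_inf k)).trans inter_subset_left
  set e : ℕ → ℕ := fun k => sInf (Ms k)
  have he_mem (k : ℕ) : e k ∈ Ms k := Nat.sInf_mem (hMs_inf k).nonempty
  have he_mono : StrictMono e := strictMono_nat_of_lt_succ fun k =>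
    (hsub _ (hMs_inf k) (hMs_succ k ▸ he_mem (k + 1))).2
  refine ⟨range e, ?_, infinite_range_of_injective he_mono.injective, ?_⟩
  · rintro _ ⟨k, rfl⟩
    exact hMs_anti (Nat.zero_le k) (he_mem k)
  · rintro _ ⟨k, rfl⟩
    refine hmono _ ?_ (hMs_succ k ▸ hQ _ (hMs_inf k))
    rintro _ ⟨⟨j, rfl⟩, hj⟩
    exact hMs_anti (he_mono.lt_iff_lt.1 hj) (he_mem j)

theorem exists_infinite_forall_finset_subset_exists (P : Finset ℕ → Prop) (h₀ : P ∅)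
    (step : ∀ s, P s → ∃ n, (∀ m ∈ s, m < n) ∧ P (insert n s)) :
    ∃ M : Set ℕ, M.Infinite ∧ ∀ F : Finset ℕ, ↑F ⊆ M → ∃ s, F ⊆ s ∧ P s := by
  choose! next hlt hP using step
  set S : ℕ → Finset ℕ := fun k => (fun s => insert (next s) s)^[k] ∅
  have hS_succ (k : ℕ) : S (k + 1) = insert (next (S k)) (S k) := Function.iterate_succ_apply' ..
  have hS (k : ℕ) : P (S k) := by
    induction k with
    | zero => exact h₀
    | succ k ih => rw [hS_succ]; exact hP _ ih
  have hS_mono : Monotone S := monotone_nat_of_le_succ fun k => by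
    rw [hS_succ]; exact Finset.subset_insert _ _
  have hnext_mono : StrictMono fun k => next (S k) := strictMono_nat_of_lt_succ fun k =>
    hlt _ (hS (k + 1)) _ (hS_succ k ▸ Finset.mem_insert_self _ _)
  refine ⟨⋃ k, ↑(S k), (infinite_range_of_injective hnext_mono.injective).mono ?_, fun F hF => ?_⟩
  · rintro _ ⟨k, rfl⟩
    exact mem_iUnion.2 ⟨k + 1, hS_succ k ▸ Finset.mem_insert_self _ _⟩
  · have hdir : Directed (· ⊆ ·) fun k => (S k : Set ℕ) :=
      (Monotone.comp (fun _ _ h => Finset.coe_subset.2 h) hS_mono).directed_le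
    obtain ⟨k, hk⟩ := hdir.exists_mem_subset_of_finset_subset_biUnion hF
    exact ⟨S k, by exact_mod_cast hk, hS k⟩

namespace NashWilliams

variable (Bad : Finset ℕ → Prop)

def Accepts (σ : Finset ℕ) (M : Set ℕ) : Prop :=
  ∀ g : ℕ → ℕ, StrictMono g → (∀ k, g k ∈ M) → ∃ m, Bad (σ ∪ (Finset.range m).image g)

def Rejects (σ : Finset ℕ) (M : Set ℕ) : Prop :=
  ∀ M' ⊆ M, M'.Infinite → ¬ Accepts Bad σ M'

def Decides (σ : Finset ℕ) (M : Set ℕ) : Prop :=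
  Accepts Bad σ M ∨ Rejects Bad σ M

def SubsetsRejected (D : Set ℕ) (s : Finset ℕ) (b : ℕ) : Prop :=
  ↑s ⊆ D ∧ (∀ m ∈ s, m ≤ b) ∧ ∀ σ ⊆ s, Rejects Bad σ (D ∩ Ioi b)

variable {Bad} {σ : Finset ℕ} {M M' : Set ℕ}

theorem Accepts.mono (h : Accepts Bad σ M) (hM : M' ⊆ M) : Accepts Bad σ M' :=
  fun g hg hgM => h g hg fun k => hM (hgM k)

theorem Rejects.mono (h : Rejects Bad σ M) (hM : M' ⊆ M) : Rejects Bad σ M' :=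
  fun M'' hM'' => h M'' (hM''.trans hM)

theorem Decides.mono (h : Decides Bad σ M) (hM : M' ⊆ M) : Decides Bad σ M' :=
  h.imp (·.mono hM) (·.mono hM)

theorem Rejects.not_accepts (h : Rejects Bad σ M) (hM : M.Infinite) : ¬ Accepts Bad σ M :=
  h M subset_rfl hM

theorem accepts_of_bad (h : Bad σ) (M : Set ℕ) : Accepts Bad σ M :=
  fun _ _ _ => ⟨0, by simpa using h⟩

theorem Rejects.not_bad (h : Rejects Bad σ M) (hM : M.Infinite) : ¬ Bad σ :=
  fun hσ => h.not_accepts hM (accepts_of_bad hσ M)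

theorem exists_subset_decides (σ : Finset ℕ) (hM : M.Infinite) :
    ∃ M' ⊆ M, M'.Infinite ∧ Decides Bad σ M' := by
  by_cases h : ∃ M' ⊆ M, M'.Infinite ∧ Accepts Bad σ M'
  · obtain ⟨M', hM', hinf, hacc⟩ := h
    exact ⟨M', hM', hinf, Or.inl hacc⟩
  · exact ⟨M, subset_rfl, hM, Or.inr fun M' hM' hinf hacc => h ⟨M', hM', hinf, hacc⟩⟩

/-- Deciding every subset of `{0, …, n}`, not only those made of points already chosen, keeps the
requirement at `n` independent of the rest of `D`. -/
theorem exists_subset_decides_below (hM : M.Infinite) :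
    ∃ D ⊆ M, D.Infinite ∧ ∀ n ∈ D, ∀ σ ⊆ Finset.range (n + 1), Decides Bad σ (D ∩ Ioi n) := by
  obtain ⟨D, hDM, hD, hdec⟩ := exists_infinite_subset_forall_inter_Ioi
    (fun n M => ∀ σ ∈ (Finset.range (n + 1)).powerset, Decides Bad σ M)
    (fun _ _ _ hM h σ hσ => (h σ hσ).mono hM)
    (fun _ _ hM => exists_infinite_subset_forall_mem_finset (Decides Bad)
      (fun _ _ _ hM h => h.mono hM) (fun σ _ hM => exists_subset_decides σ hM) _ hM) hM
  exact ⟨D, hDM, hD, fun n hn σ hσ => hdec n hn σ (Finset.mem_powerset.2 hσ)⟩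

/-- A rejected `σ` has only finitely many accepted one-point extensions: otherwise the set of
their new points would accept `σ`, by splitting off the first term of a sequence. -/
theorem Rejects.finite_setOf_accepts_insert (h : Rejects Bad σ M) :
    {n ∈ M | Accepts Bad (insert n σ) (M ∩ Ioi n)}.Finite := by
  classical
  by_contra hinf
  refine h _ (sep_subset _ _) hinf fun g hg hgI => ?_
  have htail : ∀ k, g (k + 1) ∈ M ∩ Ioi (g 0) := fun k => ⟨(hgI _).1, hg k.succ_pos⟩
  obtain ⟨m, hm⟩ := (hgI 0).2 (g ∘ Nat.succ) (hg.comp fun _ _ => Nat.succ_lt_succ) htail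
  refine ⟨m + 1, ?_⟩
  have : σ ∪ (Finset.range (m + 1)).image g =
      insert (g 0) σ ∪ (Finset.range m).image (g ∘ Nat.succ) := by
    rw [Finset.range_add_one', Finset.image_insert, Finset.map_eq_image, Finset.image_image,
      Finset.union_insert, Finset.insert_union]
    rfl
  rwa [this]

theorem SubsetsRejected.exists_insert {D : Set ℕ} (hD : D.Infinite)
    (hdec : ∀ n ∈ D, ∀ σ ⊆ Finset.range (n + 1), Decides Bad σ (D ∩ Ioi n))
    {s : Finset ℕ} {b : ℕ} (h : SubsetsRejected Bad D s b) :
    ∃ n, b < n ∧ SubsetsRejected Bad D (insert n s) n := by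
  classical
  obtain ⟨hsD, hsb, hrej⟩ := h
  have hfin : (⋃ σ ∈ s.powerset,
      {n ∈ D ∩ Ioi b | Accepts Bad (insert n σ) (D ∩ Ioi b ∩ Ioi n)}).Finite :=
    s.powerset.finite_toSet.biUnion fun σ hσ =>
      (hrej σ (Finset.mem_powerset.1 hσ)).finite_setOf_accepts_insert
  obtain ⟨n, ⟨hnD, hbn⟩, hn⟩ := (hD.inter_Ioi b).exists_notMem_finite hfin
  have hbelow : ∀ m ∈ insert n s, m ≤ n := by
    simpa using fun m hm => (hsb m hm).trans hbn.le
  refine ⟨n, hbn, by simpa using insert_subset hnD hsD, hbelow, fun σ hσ => ?_⟩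
  rw [Finset.subset_insert_iff] at hσ
  by_cases hnσ : n ∈ σ
  · rw [← Finset.insert_erase hnσ]
    refine (hdec n hnD _ fun m hm => Finset.mem_range_succ_iff.2 <|
      hbelow m (Finset.insert_subset_insert n hσ hm)).resolve_left fun hacc => hn ?_
    have htail : D ∩ Ioi b ∩ Ioi n = D ∩ Ioi n := by
      rw [inter_assoc, Ioi_inter_Ioi, max_eq_right hbn.le]
    exact mem_biUnion (Finset.mem_powerset.2 hσ) ⟨⟨hnD, hbn⟩, htail ▸ hacc⟩
  · rw [Finset.erase_eq_of_notMem hnσ] at hσ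
    exact (hrej σ hσ).mono (inter_subset_inter_right _ (Ioi_subset_Ioi hbn.le))

end NashWilliams

open NashWilliams in
theorem nash_williams (Bad : Finset ℕ → Prop) {N : Set ℕ} (hN : N.Infinite) :
    (∃ M ⊆ N, M.Infinite ∧ ∀ g : ℕ → ℕ, StrictMono g → (∀ k, g k ∈ M) →
      ∃ m, Bad ((Finset.range m).image g)) ∨
    ∃ M ⊆ N, M.Infinite ∧ ∀ F : Finset ℕ, ↑F ⊆ M → ¬ Bad F := by
  by_cases hacc : ∃ M ⊆ N, M.Infinite ∧ Accepts Bad ∅ M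
  · obtain ⟨M, hMN, hM, hacc⟩ := hacc
    exact Or.inl ⟨M, hMN, hM, fun g hg hgM => by simpa using hacc g hg hgM⟩
  have hrej : Rejects Bad ∅ N := fun M hMN hM h => hacc ⟨M, hMN, hM, h⟩
  obtain ⟨D, hDN, hD, hdec⟩ := exists_subset_decides_below (Bad := Bad) hN
  obtain ⟨M, hM, hMD⟩ := exists_infinite_forall_finset_subset_exists
    (fun s => ∃ b, SubsetsRejected Bad D s b)
    ⟨0, by simp, by simp, fun σ hσ =>
      Finset.subset_empty.1 hσ ▸ hrej.mono (inter_subset_left.trans hDN)⟩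
    fun s ⟨b, h⟩ => by
      obtain ⟨n, hbn, h'⟩ := h.exists_insert hD hdec
      exact ⟨n, fun m hm => (h.2.1 m hm).trans_lt hbn, n, h'⟩
  refine Or.inr ⟨M, fun a ha => ?_, hM, fun F hF => ?_⟩
  · obtain ⟨s, has, -, hsD, -⟩ := hMD {a} (by simpa using ha)
    exact hDN (hsD (has (Finset.mem_singleton_self a)))
  · obtain ⟨s, hFs, b, -, -, hrej⟩ := hMD F hF
    exact (hrej F hFs).not_bad (hD.inter_Ioi b)

theorem Nat.count_mem_image_range {g : ℕ → ℕ} (hg : StrictMono g) {j m : ℕ} (hj : j < m) :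
    Nat.count (· ∈ (Finset.range m).image g) (g j) = j := by
  rw [Nat.count_eq_card_filter_range]
  refine (congrArg Finset.card ?_).trans
    ((Finset.card_image_of_injective _ hg.injective).trans (Finset.card_range j))
  ext b
  simp only [Finset.mem_filter, Finset.mem_range, Finset.mem_image]
  constructor
  · rintro ⟨hb, i, -, rfl⟩
    exact ⟨i, hg.lt_iff_lt.1 hb, rfl⟩
  · rintro ⟨i, hi, rfl⟩
    exact ⟨hg hi, i, hi.trans hj, rfl⟩

/-- `Nat.count (· ∈ F) a` is the position of `a` in the increasing enumeration of `F`. -/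
def Alternates (u : ℕ → ℝ) (p q : ℝ) (F : Finset ℕ) : Prop :=
  ∀ a ∈ F, (Even (Nat.count (· ∈ F) a) → q ≤ u a) ∧ (¬ Even (Nat.count (· ∈ F) a) → u a ≤ p)

theorem alternates_image_range_iff {u : ℕ → ℝ} {p q : ℝ} {g : ℕ → ℕ} (hg : StrictMono g) (m : ℕ) :
    Alternates u p q ((Finset.range m).image g) ↔
      ∀ j < m, (Even j → q ≤ u (g j)) ∧ (¬ Even j → u (g j) ≤ p) := by
  simp only [Alternates, Finset.forall_mem_image, Finset.mem_range]
  exact forall₂_congr fun j hj => by rw [Nat.count_mem_image_range hg hj]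

section Rosenthal

variable {E : Type*} [NormedAddCommGroup E] [NormedSpace ℝ E]

def AltRealizable (x : ℕ → E) (p q : ℝ) (F : Finset ℕ) : Prop :=
  ∃ f : E →L[ℝ] ℝ, ‖f‖ ≤ 1 ∧ Alternates (fun n => f (x n)) p q F

def NoAltSequenceIn (x : ℕ → E) (p q : ℝ) (M : Set ℕ) : Prop :=
  ∀ g : ℕ → ℕ, StrictMono g → (∀ k, g k ∈ M) →
    ∃ m, ¬ AltRealizable x p q ((Finset.range m).image g)

theorem NoAltSequenceIn.mono {x : ℕ → E} {p q : ℝ} {M M' : Set ℕ} (h : NoAltSequenceIn x p q M)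
    (hM : M' ⊆ M) : NoAltSequenceIn x p q M' :=
  fun g hg hgM => h g hg fun k => hM (hgM k)

theorem abs_apply_le_norm_of_norm_le_one {f : E →L[ℝ] ℝ} (hf : ‖f‖ ≤ 1) (v : E) : |f v| ≤ ‖v‖ := by
  simpa using f.le_of_opNorm_le hf v

theorem sub_mul_sum_abs_le_two_mul_norm {y : ℕ → E} {p q : ℝ} {n : ℕ}
    (hy : ∀ S : Set ℕ, ∃ f : E →L[ℝ] ℝ, ‖f‖ ≤ 1 ∧
      ∀ k < n, (k ∈ S → q ≤ f (y k)) ∧ (k ∉ S → f (y k) ≤ p))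
    (a : ℕ → ℝ) :
    (q - p) * ∑ k ∈ Finset.range n, |a k| ≤ 2 * ‖∑ k ∈ Finset.range n, a k • y k‖ := by
  obtain ⟨f, hf, hfS⟩ := hy {k | 0 ≤ a k}
  obtain ⟨g, hg, hgS⟩ := hy {k | 0 ≤ a k}ᶜ
  set v := ∑ k ∈ Finset.range n, a k • y k
  have hterm : ∀ k ∈ Finset.range n, (q - p) * |a k| ≤ a k * f (y k) - a k * g (y k) := by
    intro k hk
    obtain ⟨hf₁, hf₂⟩ := hfS k (Finset.mem_range.1 hk)
    obtain ⟨hg₁, hg₂⟩ := hgS k (Finset.mem_range.1 hk)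
    rcases le_or_gt 0 (a k) with ha | ha
    · have := hf₁ ha
      have := hg₂ (not_not.2 ha)
      rw [abs_of_nonneg ha]
      nlinarith
    · have := hf₂ ha.not_ge
      have := hg₁ ha.not_ge
      rw [abs_of_neg ha]
      nlinarith
  calc (q - p) * ∑ k ∈ Finset.range n, |a k|
      ≤ ∑ k ∈ Finset.range n, (a k * f (y k) - a k * g (y k)) := by
        rw [Finset.mul_sum]; exact Finset.sum_le_sum hterm
    _ = f v - g v := by simp [v, Finset.sum_sub_distrib]
    _ ≤ 2 * ‖v‖ := by
        linarith [abs_le.1 (abs_apply_le_norm_of_norm_le_one hf v),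
          abs_le.1 (abs_apply_le_norm_of_norm_le_one hg v)]

/-- From each block `3k, 3k+1, 3k+2` keep two indices, chosen to put `3k+1` at an even or at an
odd position according to `S`. -/
theorem exists_sign_pattern_of_altRealizable {x : ℕ → E} {p q : ℝ} {e : ℕ → ℕ} (he : StrictMono e)
    (hA : ∀ F : Finset ℕ, ↑F ⊆ range e → AltRealizable x p q F) (n : ℕ) (S : Set ℕ) :
    ∃ f : E →L[ℝ] ℝ, ‖f‖ ≤ 1 ∧
      ∀ k < n, (k ∈ S → q ≤ f (x (e (3 * k + 1)))) ∧ (k ∉ S → f (x (e (3 * k + 1))) ≤ p) := by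
  classical
  set h : ℕ → ℕ := fun j => 3 * (j / 2) + j % 2 + if j / 2 ∈ S then 1 else 0
  have hh : StrictMono h := strictMono_nat_of_lt_succ fun j => by
    obtain ⟨k, rfl | rfl⟩ := Nat.even_or_odd' j
    · simp only [h, show 2 * k / 2 = k by omega, show (2 * k + 1) / 2 = k by omega]
      split_ifs <;> omega
    · simp only [h, show (2 * k + 1) / 2 = k by omega, show (2 * k + 1 + 1) / 2 = k + 1 by omega]
      split_ifs <;> omega
  obtain ⟨f, hf, hfalt⟩ := hA ((Finset.range (2 * n)).image (e ∘ h)) (by simp [Set.subset_def])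
  rw [alternates_image_range_iff (he.comp hh)] at hfalt
  refine ⟨f, hf, fun k hk => ⟨fun hkS => ?_, fun hkS => ?_⟩⟩
  · have hj : h (2 * k) = 3 * k + 1 := by
      simp only [h, show 2 * k / 2 = k by omega, if_pos hkS]; omega
    simpa [hj] using (hfalt (2 * k) (by omega)).1 (even_two_mul k)
  · have hj : h (2 * k + 1) = 3 * k + 1 := by
      simp only [h, show (2 * k + 1) / 2 = k by omega, if_neg hkS]; omega
    simpa [hj] using (hfalt (2 * k + 1) (by omega)).2 (Nat.not_even_two_mul_add_one k)

theorem exists_l1_subsequence {x : ℕ → E} {p q : ℝ} (hpq : p < q) {D : Set ℕ} (hD : D.Infinite)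
    (hA : ∀ F : Finset ℕ, ↑F ⊆ D → AltRealizable x p q F) :
    ∃ φ : ℕ → ℕ, StrictMono φ ∧ ∃ δ : ℝ, 0 < δ ∧ ∀ (n : ℕ) (a : ℕ → ℝ),
      δ * ∑ k ∈ Finset.range n, |a k| ≤ ‖∑ k ∈ Finset.range n, a k • x (φ k)‖ := by
  have he : StrictMono (Nat.nth (· ∈ D)) := Nat.nth_strictMono hD
  refine ⟨fun k => Nat.nth (· ∈ D) (3 * k + 1), he.comp fun _ _ _ => by omega,
    (q - p) / 2, by linarith, fun n a => ?_⟩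
  have := sub_mul_sum_abs_le_two_mul_norm (exists_sign_pattern_of_altRealizable he
    (fun F hF => hA F (hF.trans (Nat.range_nth_of_infinite hD).le)) n) a
  linarith

theorem exists_tendsto_or_exists_rat_frequently {u : ℕ → ℝ} {r : ℝ} (hu : ∀ n, |u n| ≤ r) :
    (∃ L, Tendsto u atTop (𝓝 L)) ∨
      ∃ p q : ℚ, p < q ∧ (∃ᶠ n in atTop, u n < p) ∧ ∃ᶠ n in atTop, q < u n := by
  have hle : IsBoundedUnder (· ≤ ·) atTop u := isBoundedUnder_of ⟨r, fun n => (abs_le.1 (hu n)).2⟩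
  have hge : IsBoundedUnder (· ≥ ·) atTop u := isBoundedUnder_of ⟨-r, fun n => (abs_le.1 (hu n)).1⟩
  rcases (liminf_le_limsup hle hge).eq_or_lt with heq | hlt
  · exact Or.inl ⟨_, tendsto_of_liminf_eq_limsup heq rfl hle hge⟩
  · obtain ⟨p, hp₁, hp₂⟩ := exists_rat_btwn hlt
    obtain ⟨q, hq₁, hq₂⟩ := exists_rat_btwn hp₂
    exact Or.inr ⟨p, q, by exact_mod_cast hq₁,
      frequently_lt_of_liminf_lt hle.isCoboundedUnder_ge hp₁,
      frequently_lt_of_lt_limsup hge.isCoboundedUnder_le hq₂⟩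

theorem exists_tendsto_of_noAltSequenceIn {x : ℕ → E} {r : ℝ} (hx : ∀ n, ‖x n‖ ≤ r)
    {D : Set ℕ} (hD : D.Infinite)
    (hDalt : ∀ p q : ℚ, p < q → ∃ n, NoAltSequenceIn x p q (D ∩ Ioi n))
    {f : E →L[ℝ] ℝ} (hf : ‖f‖ ≤ 1) :
    ∃ L, Tendsto (fun k => f (x (Nat.nth (· ∈ D) k))) atTop (𝓝 L) := by
  set φ := Nat.nth (· ∈ D)
  have hφ : StrictMono φ := Nat.nth_strictMono hD
  refine (exists_tendsto_or_exists_rat_frequently (r := r)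
    fun k => (abs_apply_le_norm_of_norm_le_one hf _).trans (hx _)).resolve_right ?_
  rintro ⟨p, q, hpq, hlow, hhigh⟩
  obtain ⟨n, hn⟩ := hDalt p q hpq
  have htail : ∀ᶠ k in atTop, n < φ k := hφ.tendsto_atTop.eventually_gt_atTop n
  obtain ⟨ψ, hψ, hψφ⟩ := extraction_forall_of_frequently (P := fun j k =>
      n < φ k ∧ (Even j → (q : ℝ) < f (x (φ k))) ∧ (¬ Even j → f (x (φ k)) < p)) fun j => by
    by_cases hj : Even j
    · exact (hhigh.and_eventually htail).mono fun k h => ⟨h.2, fun _ => h.1, (absurd hj ·)⟩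
    · exact (hlow.and_eventually htail).mono fun k h => ⟨h.2, (absurd · hj), fun _ => h.1⟩
  obtain ⟨m, hm⟩ := hn (φ ∘ ψ) (hφ.comp hψ) fun k => ⟨Nat.nth_mem_of_infinite hD _, (hψφ k).1⟩
  exact hm ⟨f, hf, (alternates_image_range_iff (hφ.comp hψ) m).2 fun j _ =>
    ⟨fun hj => ((hψφ j).2.1 hj).le, fun hj => ((hψφ j).2.2 hj).le⟩⟩

theorem exists_infinite_noAltSequenceIn {x : ℕ → E}
    (h : ¬ ∃ p q : ℚ, p < q ∧ ∃ D : Set ℕ, D.Infinite ∧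
      ∀ F : Finset ℕ, ↑F ⊆ D → AltRealizable x p q F) :
    ∃ D : Set ℕ, D.Infinite ∧ ∀ p q : ℚ, p < q → ∃ n, NoAltSequenceIn x p q (D ∩ Ioi n) := by
  set P : ℚ × ℚ → Set ℕ → Prop := fun pq M => pq.1 < pq.2 → NoAltSequenceIn x pq.1 pq.2 M
  have hmono (pq : ℚ × ℚ) {M M' : Set ℕ} (hM : M' ⊆ M) (hP : P pq M) : P pq M' :=
    fun hpq => (hP hpq).mono hM
  have hex (pq : ℚ × ℚ) {M : Set ℕ} (hM : M.Infinite) : ∃ M' ⊆ M, M'.Infinite ∧ P pq M' := by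
    by_cases hpq : pq.1 < pq.2
    · rcases nash_williams (fun F => ¬ AltRealizable x pq.1 pq.2 F) hM with
        ⟨M', hM', hinf, hbad⟩ | ⟨M', -, hinf, hgood⟩
      · exact ⟨M', hM', hinf, fun _ => hbad⟩
      · exact absurd ⟨pq.1, pq.2, hpq, M', hinf, fun F hF => not_not.1 (hgood F hF)⟩ h
    · exact ⟨M, subset_rfl, hM, (absurd · hpq)⟩
  obtain ⟨π, hπ⟩ := exists_surjective_nat (ℚ × ℚ)
  obtain ⟨D, -, hD, hDP⟩ := exists_infinite_subset_forall_inter_Ioi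
    (fun n M => ∀ pq ∈ (Finset.range (n + 1)).image π, P pq M)
    (fun _ _ _ hM h pq hpq => hmono pq hM (h pq hpq))
    (fun _ _ hM => exists_infinite_subset_forall_mem_finset P hmono hex _ hM) infinite_univ
  refine ⟨D, hD, fun p q hpq => ?_⟩
  obtain ⟨i, hi⟩ := hπ (p, q)
  obtain ⟨n, hnD, hin⟩ := hD.exists_gt i
  exact ⟨n, hDP n hnD (p, q) (Finset.mem_image.2 ⟨i, Finset.mem_range.2 (by omega), hi⟩) hpq⟩

theorem exists_tendsto_of_forall_norm_le_one {y : ℕ → E}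
    (h : ∀ f : E →L[ℝ] ℝ, ‖f‖ ≤ 1 → ∃ L, Tendsto (fun n => f (y n)) atTop (𝓝 L))
    (f : E →L[ℝ] ℝ) : ∃ L, Tendsto (fun n => f (y n)) atTop (𝓝 L) := by
  have hc : 0 < ‖f‖ + 1 := by positivity
  obtain ⟨L, hL⟩ := h ((‖f‖ + 1)⁻¹ • f) <| by
    rw [norm_smul, norm_inv, Real.norm_of_nonneg hc.le, inv_mul_le_iff₀ hc]
    linarith
  refine ⟨(‖f‖ + 1) * L, (hL.const_mul (‖f‖ + 1)).congr fun n => ?_⟩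
  simp [hc.ne']

end Rosenthal

theorem rosenthal_l1_dichotomy_general (E : Type*) [NormedAddCommGroup E] [NormedSpace ℝ E]
    (x : ℕ → E) (hbdd : ∃ r : ℝ, ∀ n, ‖x n‖ ≤ r) :
    (∃ φ : ℕ → ℕ, StrictMono φ ∧
        ∀ f : E →L[ℝ] ℝ, ∃ L : ℝ, Tendsto (fun n => f (x (φ n))) atTop (𝓝 L)) ∨
      (∃ φ : ℕ → ℕ, StrictMono φ ∧ ∃ δ : ℝ, 0 < δ ∧
        ∀ (n : ℕ) (a : ℕ → ℝ),
          δ * ∑ k ∈ Finset.range n, |a k| ≤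
            ‖∑ k ∈ Finset.range n, a k • x (φ k)‖) := by
  by_cases h : ∃ p q : ℚ, p < q ∧ ∃ D : Set ℕ, D.Infinite ∧
      ∀ F : Finset ℕ, ↑F ⊆ D → AltRealizable x p q F
  · obtain ⟨p, q, hpq, D, hD, hA⟩ := h
    exact Or.inr (exists_l1_subsequence (by exact_mod_cast hpq) hD hA)
  · obtain ⟨r, hr⟩ := hbdd
    obtain ⟨D, hD, hDalt⟩ := exists_infinite_noAltSequenceIn h
    exact Or.inl ⟨_, Nat.nth_strictMono hD, exists_tendsto_of_forall_norm_le_one fun f hf =>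
      exists_tendsto_of_noAltSequenceIn hr hD hDalt hf⟩

/-- Rosenthal's ℓ¹ dichotomy: every bounded sequence in a Banach space `E`
either has a weakly Cauchy subsequence, or has a subsequence equivalent to the
unit vector basis of `ℓ¹`. -/
theorem rosenthal_l1_dichotomy (E : Type*) [NormedAddCommGroup E] [NormedSpace ℝ E]
    [CompleteSpace E] (x : ℕ → E) (hbdd : ∃ r : ℝ, ∀ n, ‖x n‖ ≤ r) :
    (∃ φ : ℕ → ℕ, StrictMono φ ∧
        ∀ f : E →L[ℝ] ℝ, ∃ L : ℝ, Tendsto (fun n => f (x (φ n))) atTop (𝓝 L)) ∨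
      (∃ φ : ℕ → ℕ, StrictMono φ ∧ ∃ δ : ℝ, 0 < δ ∧
        ∀ (n : ℕ) (a : ℕ → ℝ),
          δ * ∑ k ∈ Finset.range n, |a k| ≤
            ‖∑ k ∈ Finset.range n, a k • x (φ k)‖) :=
  rosenthal_l1_dichotomy_general E x hbdd
end
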